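/- arXiv:2403.15302 — 11 statements merged into one kernel-verified Lean document; each statement's English description precedes it below -/
import Mathlib

section
/- Fix t ∈ (0, τ]. For every π ∈ (0, 1), the map π ↦ Var(t, π) is differentiable at π with derivative equal to −n·S(t)²·∫₀^t f(r)·ψ(r)/Y(r, π)² dr. -/
open MeasureTheory intervalIntegral Set

/-!
Since `Y r π · S r = A r + π · B r` with `A = n S² qP` and `B = n S² ψ`, the variance is
`S(t)²` times a parametric integral whose integrand `f / (A + π B)` has denominator affine in `π`.
On a segment of parameters the affine denominator is bounded below by its smaller endpoint value,
which is positive and continuous in `r`; this gives an integrable bound on the `π`-derivative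
`-f B / (A + π B)²`, so one may differentiate under the integral sign.
-/

theorem min_le_add_mul_of_mem_Icc {A B α β x : ℝ} (hx : x ∈ Icc α β) :
    min (A + α * B) (A + β * B) ≤ A + x * B := by
  rcases le_total 0 B with hB | hB
  · exact (min_le_left _ _).trans (by nlinarith [hx.1])
  · exact (min_le_right _ _).trans (by nlinarith [hx.2])

theorem hasDerivAt_div_add_mul {g a b x : ℝ} (h : a + x * b ≠ 0) :
    HasDerivAt (fun y => g / (a + y * b)) (-(g * b) / (a + x * b) ^ 2) x :=
  ((hasDerivAt_const x g).div (((hasDerivAt_id' x).mul_const b).const_add a) h).congr_deriv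
    (by ring)

theorem hasDerivAt_intervalIntegral_div_add_mul {g A B : ℝ → ℝ} {a b α β x₀ : ℝ}
    (hg : ContinuousOn g (uIcc a b)) (hA : ContinuousOn A (uIcc a b))
    (hB : ContinuousOn B (uIcc a b))
    (hα : ∀ r ∈ uIcc a b, 0 < A r + α * B r) (hβ : ∀ r ∈ uIcc a b, 0 < A r + β * B r)
    (hx₀ : x₀ ∈ Ioo α β) :
    HasDerivAt (fun x => ∫ r in a..b, g r / (A r + x * B r))
      (∫ r in a..b, -(g r * B r) / (A r + x₀ * B r) ^ 2) x₀ := by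
  set m : ℝ → ℝ := fun r => min (A r + α * B r) (A r + β * B r)
  have hm_pos : ∀ r ∈ uIcc a b, 0 < m r := fun r hr => lt_min (hα r hr) (hβ r hr)
  have hm_le : ∀ x ∈ Ioo α β, ∀ r, m r ≤ A r + x * B r := fun x hx r =>
    min_le_add_mul_of_mem_Icc (Ioo_subset_Icc_self hx)
  have hD_pos : ∀ x ∈ Ioo α β, ∀ r ∈ uIcc a b, 0 < A r + x * B r := fun x hx r hr =>
    (hm_pos r hr).trans_le (hm_le x hx r)
  have hD_cont : ∀ x, ContinuousOn (fun r => A r + x * B r) (uIcc a b) := fun x =>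
    hA.add (continuousOn_const.mul hB)
  have hF_cont : ∀ x ∈ Ioo α β, ContinuousOn (fun r => g r / (A r + x * B r)) (uIcc a b) :=
    fun x hx => hg.div (hD_cont x) fun r hr => (hD_pos x hx r hr).ne'
  have hF'_cont : ContinuousOn (fun r => -(g r * B r) / (A r + x₀ * B r) ^ 2) (uIcc a b) :=
    (hg.mul hB).neg.div ((hD_cont x₀).pow 2) fun r hr => pow_ne_zero 2 (hD_pos x₀ hx₀ r hr).ne'
  have hbound_cont : ContinuousOn (fun r => |g r * B r| / m r ^ 2) (uIcc a b) :=
    (hg.mul hB).abs.div (((hD_cont α).inf (hD_cont β)).pow 2) fun r hr =>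
      pow_ne_zero 2 (hm_pos r hr).ne'
  have hF_meas : ∀ᶠ x in nhds x₀,
      AEStronglyMeasurable (fun r => g r / (A r + x * B r)) (volume.restrict (uIoc a b)) := by
    filter_upwards [Ioo_mem_nhds hx₀.1 hx₀.2] with x hx
    exact ((hF_cont x hx).mono uIoc_subset_uIcc).aestronglyMeasurable measurableSet_uIoc
  have h_bound : ∀ r ∈ uIoc a b, ∀ x ∈ Ioo α β,
      ‖-(g r * B r) / (A r + x * B r) ^ 2‖ ≤ |g r * B r| / m r ^ 2 := by
    intro r hr x hx
    have hm := hm_pos r (uIoc_subset_uIcc hr)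
    rw [Real.norm_eq_abs, abs_div, abs_neg, abs_of_nonneg (sq_nonneg (A r + x * B r))]
    exact div_le_div_of_nonneg_left (abs_nonneg _) (pow_pos hm 2)
      (pow_le_pow_left₀ hm.le (hm_le x hx r) 2)
  exact (hasDerivAt_integral_of_dominated_loc_of_deriv_le (Ioo_mem_nhds hx₀.1 hx₀.2) hF_meas
    (hF_cont x₀ hx₀).intervalIntegrable
    ((hF'_cont.mono uIoc_subset_uIcc).aestronglyMeasurable measurableSet_uIoc)
    (ae_of_all _ h_bound) hbound_cont.intervalIntegrable
    (ae_of_all _ fun r hr x hx =>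
      hasDerivAt_div_add_mul (hD_pos x hx r (uIoc_subset_uIcc hr)).ne')).2

theorem km_variance_hasDerivAt_general
    (τ n : ℝ)
    (f S qP qI : ℝ → ℝ)
    (hf_cont : ContinuousOn f (Set.Icc 0 τ)) (hS_cont : ContinuousOn S (Set.Icc 0 τ))
    (hqP_cont : ContinuousOn qP (Set.Icc 0 τ)) (hqI_cont : ContinuousOn qI (Set.Icc 0 τ))
    (hS_pos : ∀ r ∈ Set.Icc (0:ℝ) τ, 0 < S r)
    (ψ : ℝ → ℝ) (hψ : ∀ r, ψ r = qI r - qP r)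
    (Y : ℝ → ℝ → ℝ) (hY : ∀ r p, Y r p = n * S r * ((1 - p) * qP r + p * qI r))
    (hY_pos : ∀ p ∈ Set.Icc (0:ℝ) 1, ∀ r ∈ Set.Icc (0:ℝ) τ, 0 < Y r p)
    (Var : ℝ → ℝ → ℝ)
    (hVar : ∀ t p, Var t p = S t ^ 2 * ∫ r in (0:ℝ)..t, f r / (Y r p * S r))
    (t : ℝ) (ht : t ∈ Set.Ioc 0 τ)
    (p : ℝ) (hp : p ∈ Set.Ioo (0:ℝ) 1) :
    HasDerivAt (fun q => Var t q)
      (-(n * S t ^ 2 * ∫ r in (0:ℝ)..t, f r * ψ r / (Y r p) ^ 2)) p := by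
  have hsub : uIcc 0 t ⊆ Icc 0 τ := uIcc_of_le ht.1.le ▸ Icc_subset_Icc_right ht.2
  set A : ℝ → ℝ := fun r => n * S r ^ 2 * qP r
  set B : ℝ → ℝ := fun r => n * S r ^ 2 * ψ r
  have hYS : ∀ r q, Y r q * S r = A r + q * B r := fun r q => by
    simp only [A, B, hY, hψ]
    ring
  have hYS_pos : ∀ q ∈ Icc (0:ℝ) 1, ∀ r ∈ uIcc 0 t, 0 < A r + q * B r := fun q hq r hr =>
    hYS r q ▸ mul_pos (hY_pos q hq r (hsub hr)) (hS_pos r (hsub hr))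
  have hS2 : ContinuousOn (fun r => n * S r ^ 2) (uIcc 0 t) :=
    continuousOn_const.mul ((hS_cont.mono hsub).pow 2)
  have hψ_cont : ContinuousOn ψ (uIcc 0 t) :=
    ((hqI_cont.sub hqP_cont).mono hsub).congr fun r _ => hψ r
  have hderiv := (hasDerivAt_intervalIntegral_div_add_mul (A := A) (B := B) (hf_cont.mono hsub)
    (hS2.mul (hqP_cont.mono hsub)) (hS2.mul hψ_cont) (hYS_pos 0 (by simp)) (hYS_pos 1 (by simp))
    hp).const_mul (S t ^ 2)
  have hVar_eq : (fun q => Var t q) = fun q => S t ^ 2 * ∫ r in 0..t, f r / (A r + q * B r) := by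
    funext q
    simp only [hVar, hYS]
  rw [hVar_eq]
  refine hderiv.congr_deriv ?_
  rw [← intervalIntegral.integral_const_mul, ← intervalIntegral.integral_const_mul,
    ← intervalIntegral.integral_neg]
  refine integral_congr fun r hr => ?_
  have hS := (hS_pos r (hsub hr)).ne'
  have hYp := (hY_pos p (Ioo_subset_Icc_self hp) r (hsub hr)).ne'
  simp only [B, ← hYS]
  field_simp

/-- Fix t ∈ (0, τ]. For every π ∈ (0, 1), the map π ↦ Var(t, π) is
differentiable at π with derivative equal to −n·S(t)²·∫₀ᵗ f(r)·ψ(r)/Y(r, π)² dr. -/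
theorem km_variance_hasDerivAt
    (τ θ n c : ℝ) (hτ : 0 < τ) (hθ : 0 < θ) (hn : 0 < n) (hc : 0 < c)
    (f S qP qI : ℝ → ℝ)
    (hf_cont : ContinuousOn f (Set.Icc 0 τ)) (hS_cont : ContinuousOn S (Set.Icc 0 τ))
    (hqP_cont : ContinuousOn qP (Set.Icc 0 τ)) (hqI_cont : ContinuousOn qI (Set.Icc 0 τ))
    (hf_pos : ∀ r ∈ Set.Icc (0:ℝ) τ, 0 < f r) (hS_pos : ∀ r ∈ Set.Icc (0:ℝ) τ, 0 < S r)
    (hqP_pos : ∀ r ∈ Set.Icc (0:ℝ) τ, 0 < qP r) (hqI_pos : ∀ r ∈ Set.Icc (0:ℝ) τ, 0 < qI r)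
    (ψ : ℝ → ℝ) (hψ : ∀ r, ψ r = qI r - qP r)
    (Y : ℝ → ℝ → ℝ) (hY : ∀ r p, Y r p = n * S r * ((1 - p) * qP r + p * qI r))
    (hY_pos : ∀ p ∈ Set.Icc (0:ℝ) 1, ∀ r ∈ Set.Icc (0:ℝ) τ, 0 < Y r p)
    (Var : ℝ → ℝ → ℝ)
    (hVar : ∀ t p, Var t p = S t ^ 2 * ∫ r in (0:ℝ)..t, f r / (Y r p * S r))
    (t : ℝ) (ht : t ∈ Set.Ioc 0 τ)
    (p : ℝ) (hp : p ∈ Set.Ioo (0:ℝ) 1) :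
    HasDerivAt (fun q => Var t q)
      (-(n * S t ^ 2 * ∫ r in (0:ℝ)..t, f r * ψ r / (Y r p) ^ 2)) p :=
  km_variance_hasDerivAt_general τ n f S qP qI hf_cont hS_cont hqP_cont hqI_cont hS_pos ψ hψ Y hY
    hY_pos Var hVar t ht p hp
end

section
/- Fix t ∈ (0, τ]. The function π ↦ Var(t, π) is convex on the interval [0, 1]. -/
/-! For each `r`, the at-risk function `π ↦ Y(r, π) S(r)` is affine and positive on `[0, 1]`, so
`π ↦ f(r) / (Y(r, π) S(r))` is convex, `x ↦ 1 / x` being convex on `(0, ∞)`. Integrating over `r`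
and scaling by `S(t)² ≥ 0` preserve convexity. -/

open Set

theorem convexOn_div_lineMap {x y k : ℝ} (hx : 0 < x) (hy : 0 < y) (hk : 0 ≤ k) :
    ConvexOn ℝ (Icc 0 1) fun p => k / ((1 - p) * x + p * y) := by
  have hmaps : Icc (0 : ℝ) 1 ⊆ AffineMap.lineMap x y ⁻¹' Ioi 0 := fun p hp =>
    (convex_Ioi (0 : ℝ)).lineMap_mem (x := x) hx hy hp
  refine ((((convexOn_zpow (-1)).comp_affineMap _).subset hmaps (convex_Icc 0 1)).smul hk).congr
    fun p _ => ?_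
  simp [AffineMap.lineMap_apply_module, div_eq_mul_inv]

theorem ConvexOn.intervalIntegral {E : Type*} [AddCommGroup E] [Module ℝ E] {s : Set E}
    {g : ℝ → E → ℝ} {a b : ℝ} (hab : a ≤ b) (hconv : ∀ r ∈ Icc a b, ConvexOn ℝ s (g r))
    (hint : ∀ p ∈ s, IntervalIntegrable (g · p) MeasureTheory.volume a b) :
    ConvexOn ℝ s fun p => ∫ r in a..b, g r p := by
  refine ⟨(hconv a ⟨le_rfl, hab⟩).1, fun p hp q hq α β hα hβ hαβ => ?_⟩
  have hpq := (hconv a ⟨le_rfl, hab⟩).1 hp hq hα hβ hαβ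
  have hαp := (hint p hp).const_mul α
  have hβq := (hint q hq).const_mul β
  simp only [smul_eq_mul] at hpq ⊢
  calc ∫ r in a..b, g r (α • p + β • q)
      ≤ ∫ r in a..b, (α * g r p + β * g r q) :=
        intervalIntegral.integral_mono_on hab (hint _ hpq) (hαp.add hβq)
          fun r hr => (hconv r hr).2 hp hq hα hβ hαβ
    _ = α * (∫ r in a..b, g r p) + β * ∫ r in a..b, g r q := by
        rw [intervalIntegral.integral_add hαp hβq, intervalIntegral.integral_const_mul,
          intervalIntegral.integral_const_mul]

theorem km_variance_convexOn_general
    (τ n : ℝ)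
    (f S qP qI : ℝ → ℝ)
    (hf_cont : ContinuousOn f (Set.Icc 0 τ)) (hS_cont : ContinuousOn S (Set.Icc 0 τ))
    (hqP_cont : ContinuousOn qP (Set.Icc 0 τ)) (hqI_cont : ContinuousOn qI (Set.Icc 0 τ))
    (hf_pos : ∀ r ∈ Set.Icc (0:ℝ) τ, 0 < f r) (hS_pos : ∀ r ∈ Set.Icc (0:ℝ) τ, 0 < S r)
    (Y : ℝ → ℝ → ℝ) (hY : ∀ r p, Y r p = n * S r * ((1 - p) * qP r + p * qI r))
    (hY_pos : ∀ p ∈ Set.Icc (0:ℝ) 1, ∀ r ∈ Set.Icc (0:ℝ) τ, 0 < Y r p)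
    (Var : ℝ → ℝ → ℝ)
    (hVar : ∀ t p, Var t p = S t ^ 2 * ∫ r in (0:ℝ)..t, f r / (Y r p * S r))
    (t : ℝ) (ht : t ∈ Set.Ioc 0 τ) :
    ConvexOn ℝ (Set.Icc (0:ℝ) 1) (fun p => Var t p) := by
  obtain ⟨ht0, htτ⟩ := ht
  have hsub : Icc 0 t ⊆ Icc 0 τ := Icc_subset_Icc_right htτ
  have hYS : ∀ r p, Y r p * S r = (1 - p) * (Y r 0 * S r) + p * (Y r 1 * S r) := by
    intro r p
    simp only [hY]
    ring
  have hYS_pos : ∀ r ∈ Icc 0 t, ∀ p ∈ Icc (0 : ℝ) 1, 0 < Y r p * S r := fun r hr p hp =>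
    mul_pos (hY_pos p hp r (hsub hr)) (hS_pos r (hsub hr))
  have hconv : ∀ r ∈ Icc 0 t, ConvexOn ℝ (Icc 0 1) fun p => f r / (Y r p * S r) := fun r hr =>
    (convexOn_div_lineMap (hYS_pos r hr 0 (left_mem_Icc.2 zero_le_one))
      (hYS_pos r hr 1 (right_mem_Icc.2 zero_le_one)) (hf_pos r (hsub hr)).le).congr
      fun p _ => by rw [hYS r p]
  have hint : ∀ p ∈ Icc (0 : ℝ) 1,
      IntervalIntegrable (fun r => f r / (Y r p * S r)) MeasureTheory.volume 0 t := by
    intro p hp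
    refine ContinuousOn.intervalIntegrable_of_Icc ht0.le (ContinuousOn.div (hf_cont.mono hsub) ?_
      fun r hr => (hYS_pos r hr p hp).ne')
    simp only [hY]
    exact ContinuousOn.mono (by fun_prop) hsub
  simp only [hVar]
  exact (ConvexOn.intervalIntegral ht0.le hconv hint).smul (sq_nonneg (S t))

/-- Fix t ∈ (0, τ]. The function π ↦ Var(t, π) is convex on [0, 1]. -/
theorem km_variance_convexOn
    (τ θ n c : ℝ) (hτ : 0 < τ) (hθ : 0 < θ) (hn : 0 < n) (hc : 0 < c)
    (f S qP qI : ℝ → ℝ)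
    (hf_cont : ContinuousOn f (Set.Icc 0 τ)) (hS_cont : ContinuousOn S (Set.Icc 0 τ))
    (hqP_cont : ContinuousOn qP (Set.Icc 0 τ)) (hqI_cont : ContinuousOn qI (Set.Icc 0 τ))
    (hf_pos : ∀ r ∈ Set.Icc (0:ℝ) τ, 0 < f r) (hS_pos : ∀ r ∈ Set.Icc (0:ℝ) τ, 0 < S r)
    (hqP_pos : ∀ r ∈ Set.Icc (0:ℝ) τ, 0 < qP r) (hqI_pos : ∀ r ∈ Set.Icc (0:ℝ) τ, 0 < qI r)
    (ψ : ℝ → ℝ) (hψ : ∀ r, ψ r = qI r - qP r)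
    (Y : ℝ → ℝ → ℝ) (hY : ∀ r p, Y r p = n * S r * ((1 - p) * qP r + p * qI r))
    (hY_pos : ∀ p ∈ Set.Icc (0:ℝ) 1, ∀ r ∈ Set.Icc (0:ℝ) τ, 0 < Y r p)
    (Var : ℝ → ℝ → ℝ)
    (hVar : ∀ t p, Var t p = S t ^ 2 * ∫ r in (0:ℝ)..t, f r / (Y r p * S r))
    (t : ℝ) (ht : t ∈ Set.Ioc 0 τ) :
    ConvexOn ℝ (Set.Icc (0:ℝ) 1) (fun p => Var t p) :=
  km_variance_convexOn_general τ n f S qP qI hf_cont hS_cont hqP_cont hqI_cont hf_pos hS_pos Y hY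
    hY_pos Var hVar t ht
end

section
/- Fix t ∈ (0, τ]. If there exists r₀ ∈ (0, t) with ψ(r₀) ≠ 0, then the function π ↦ Var(t, π) is strictly convex on the interval [0, 1]. -/
/-!
For each `r`, the integrand `f r / (Y r π * S r)` equals `k / (α + π β)` with `k = f r > 0`,
`α = n S(r)² qP(r)` and `β = n S(r)² ψ(r)`: the reciprocal of a positive affine function of `π`,
hence convex in `π`, and strictly convex wherever `ψ(r) ≠ 0`. Integrating over `[0, t]` keeps
convexity, and the Jensen gap of the integrand is continuous, nonnegative and positive at `r₀`,
so its integral is positive.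
-/

open Set intervalIntegral

lemma StrictConvexOn.const_mul {E : Type*} [AddCommMonoid E] [Module ℝ E] {s : Set E}
    {f : E → ℝ} {c : ℝ} (hf : StrictConvexOn ℝ s f) (hc : 0 < c) :
    StrictConvexOn ℝ s (fun x => c * f x) := by
  refine ⟨hf.1, fun x hx y hy hxy a b ha hb hab => ?_⟩
  calc c * f (a • x + b • y) < c * (a • f x + b • f y) :=
        mul_lt_mul_of_pos_left (hf.2 hx hy hxy ha hb hab) hc
    _ = a • (c * f x) + b • (c * f y) := by simp only [smul_eq_mul]; ring

lemma div_jensen_gap (k u v a b : ℝ) (hu : u ≠ 0) (hv : v ≠ 0) (hw : a * u + b * v ≠ 0)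
    (hab : a + b = 1) :
    a * (k / u) + b * (k / v) - k / (a * u + b * v)
      = k * a * b * (u - v) ^ 2 / (u * v * (a * u + b * v)) := by
  obtain rfl : b = 1 - a := by linarith
  field_simp
  ring

lemma div_convex_combination_le {k u v a b : ℝ} (hk : 0 ≤ k) (hu : 0 < u) (hv : 0 < v)
    (ha : 0 ≤ a) (hb : 0 ≤ b) (hab : a + b = 1) :
    k / (a * u + b * v) ≤ a * (k / u) + b * (k / v) := by
  have hw : 0 < a * u + b * v := by
    rcases ha.eq_or_lt with rfl | ha
    · rw [zero_add] at hab; rw [hab]; linarith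
    · positivity
  have := div_jensen_gap k u v a b hu.ne' hv.ne' hw.ne' hab
  have : 0 ≤ k * a * b * (u - v) ^ 2 / (u * v * (a * u + b * v)) := by positivity
  linarith

lemma div_convex_combination_lt {k u v a b : ℝ} (hk : 0 < k) (hu : 0 < u) (hv : 0 < v)
    (huv : u ≠ v) (ha : 0 < a) (hb : 0 < b) (hab : a + b = 1) :
    k / (a * u + b * v) < a * (k / u) + b * (k / v) := by
  have := div_jensen_gap k u v a b hu.ne' hv.ne' (by positivity) hab
  have : 0 < k * a * b * (u - v) ^ 2 / (u * v * (a * u + b * v)) := by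
    have := sub_ne_zero.mpr huv
    positivity
  linarith

lemma affine_convex_combination (α β x y a b : ℝ) (hab : a + b = 1) :
    α + (a * x + b * y) * β = a * (α + x * β) + b * (α + y * β) := by
  linear_combination (-α) * hab

lemma convexOn_div_affine {s : Set ℝ} (hs : Convex ℝ s) {k α β : ℝ} (hk : 0 ≤ k)
    (hpos : ∀ p ∈ s, 0 < α + p * β) : ConvexOn ℝ s (fun p => k / (α + p * β)) :=
  ⟨hs, fun x hx y hy a b ha hb hab => by
    simp only [smul_eq_mul]
    rw [affine_convex_combination α β x y a b hab]
    exact div_convex_combination_le hk (hpos x hx) (hpos y hy) ha hb hab⟩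

lemma strictConvexOn_div_affine {s : Set ℝ} (hs : Convex ℝ s) {k α β : ℝ} (hk : 0 < k)
    (hβ : β ≠ 0) (hpos : ∀ p ∈ s, 0 < α + p * β) :
    StrictConvexOn ℝ s (fun p => k / (α + p * β)) :=
  ⟨hs, fun x hx y hy hxy a b ha hb hab => by
    have huv : α + x * β ≠ α + y * β := by
      rw [Ne, add_right_inj, mul_left_inj' hβ]; exact hxy
    simp only [smul_eq_mul]
    rw [affine_convex_combination α β x y a b hab]
    exact div_convex_combination_lt hk (hpos x hx) (hpos y hy) huv ha hb hab⟩

theorem strictConvexOn_intervalIntegral {E : Type*} [AddCommGroup E] [Module ℝ E] {s : Set E}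
    {g : E → ℝ → ℝ} {a b : ℝ} (hs : Convex ℝ s) (hab : a < b)
    (hcont : ∀ p ∈ s, ContinuousOn (g p) (Icc a b))
    (hconv : ∀ r ∈ Icc a b, ConvexOn ℝ s (fun p => g p r))
    (hstrict : ∃ r₀ ∈ Icc a b, StrictConvexOn ℝ s (fun p => g p r₀)) :
    StrictConvexOn ℝ s (fun p => ∫ r in a..b, g p r) := by
  refine ⟨hs, fun x hx y hy hxy c d hc hd hcd => ?_⟩
  have hint : ∀ p ∈ s, IntervalIntegrable (g p) MeasureTheory.volume a b :=
    fun p hp => (hcont p hp).intervalIntegrable_of_Icc hab.le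
  obtain ⟨r₀, hr₀, hr₀_strict⟩ := hstrict
  calc ∫ r in a..b, g (c • x + d • y) r < ∫ r in a..b, c • g x r + d • g y r :=
        integral_lt_integral_of_continuousOn_of_le_of_exists_lt hab
          (hcont _ (hs hx hy hc.le hd.le hcd))
          (((hcont x hx).const_smul c).add ((hcont y hy).const_smul d))
          (fun r hr => (hconv r (Ioc_subset_Icc_self hr)).2 hx hy hc.le hd.le hcd)
          ⟨r₀, hr₀, hr₀_strict.2 hx hy hxy hc hd hcd⟩
    _ = c • (∫ r in a..b, g x r) + d • ∫ r in a..b, g y r := by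
        simp only [smul_eq_mul]
        rw [integral_add ((hint x hx).const_mul c) ((hint y hy).const_mul d),
          integral_const_mul, integral_const_mul]

theorem km_variance_strictConvexOn_general
    (τ n : ℝ) (hn : 0 < n)
    (f S qP qI : ℝ → ℝ)
    (hf_cont : ContinuousOn f (Set.Icc 0 τ)) (hS_cont : ContinuousOn S (Set.Icc 0 τ))
    (hqP_cont : ContinuousOn qP (Set.Icc 0 τ)) (hqI_cont : ContinuousOn qI (Set.Icc 0 τ))
    (hf_pos : ∀ r ∈ Set.Icc (0:ℝ) τ, 0 < f r) (hS_pos : ∀ r ∈ Set.Icc (0:ℝ) τ, 0 < S r)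
    (ψ : ℝ → ℝ) (hψ : ∀ r, ψ r = qI r - qP r)
    (Y : ℝ → ℝ → ℝ) (hY : ∀ r p, Y r p = n * S r * ((1 - p) * qP r + p * qI r))
    (hY_pos : ∀ p ∈ Set.Icc (0:ℝ) 1, ∀ r ∈ Set.Icc (0:ℝ) τ, 0 < Y r p)
    (Var : ℝ → ℝ → ℝ)
    (hVar : ∀ t p, Var t p = S t ^ 2 * ∫ r in (0:ℝ)..t, f r / (Y r p * S r))
    (t : ℝ) (ht : t ∈ Set.Ioc 0 τ)
    (hψ_ne : ∃ r₀ ∈ Set.Ioo (0:ℝ) t, ψ r₀ ≠ 0) :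
    StrictConvexOn ℝ (Set.Icc (0:ℝ) 1) (fun p => Var t p) := by
  obtain ⟨ht0, htτ⟩ := ht
  have hsub : Icc 0 t ⊆ Icc 0 τ := Icc_subset_Icc_right htτ
  have hden : ∀ r p, Y r p * S r = n * S r ^ 2 * qP r + p * (n * S r ^ 2 * ψ r) := by
    intro r p; rw [hY, hψ]; ring
  have hden_pos : ∀ r ∈ Icc 0 τ, ∀ p ∈ Icc (0:ℝ) 1, 0 < Y r p * S r :=
    fun r hr p hp => mul_pos (hY_pos p hp r hr) (hS_pos r hr)
  have hden_cont : ∀ p, ContinuousOn (fun r => Y r p * S r) (Icc 0 τ) := by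
    intro p; simp only [hY]; fun_prop
  obtain ⟨r₀, hr₀, hψr₀⟩ := hψ_ne
  simp only [hVar]
  refine StrictConvexOn.const_mul ?_ (pow_pos (hS_pos t ⟨ht0.le, htτ⟩) 2)
  refine strictConvexOn_intervalIntegral (convex_Icc 0 1) ht0
    (fun p hp => (hf_cont.div (hden_cont p) fun r hr => (hden_pos r hr p hp).ne').mono hsub)
    (fun r hr => ?_) ⟨r₀, Ioo_subset_Icc_self hr₀, ?_⟩
  · have hr := hsub hr
    simp only [hden] at hden_pos ⊢
    exact convexOn_div_affine (convex_Icc 0 1) (hf_pos r hr).le (hden_pos r hr)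
  · have hr := hsub (Ioo_subset_Icc_self hr₀)
    simp only [hden] at hden_pos ⊢
    exact strictConvexOn_div_affine (convex_Icc 0 1) (hf_pos r₀ hr)
      (mul_ne_zero (by have := hS_pos r₀ hr; positivity) hψr₀) (hden_pos r₀ hr)

/-- Fix t ∈ (0, τ]. If there exists r₀ ∈ (0, t) with ψ(r₀) ≠ 0, then
π ↦ Var(t, π) is strictly convex on [0, 1]. -/
theorem km_variance_strictConvexOn
    (τ θ n c : ℝ) (hτ : 0 < τ) (hθ : 0 < θ) (hn : 0 < n) (hc : 0 < c)
    (f S qP qI : ℝ → ℝ)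
    (hf_cont : ContinuousOn f (Set.Icc 0 τ)) (hS_cont : ContinuousOn S (Set.Icc 0 τ))
    (hqP_cont : ContinuousOn qP (Set.Icc 0 τ)) (hqI_cont : ContinuousOn qI (Set.Icc 0 τ))
    (hf_pos : ∀ r ∈ Set.Icc (0:ℝ) τ, 0 < f r) (hS_pos : ∀ r ∈ Set.Icc (0:ℝ) τ, 0 < S r)
    (hqP_pos : ∀ r ∈ Set.Icc (0:ℝ) τ, 0 < qP r) (hqI_pos : ∀ r ∈ Set.Icc (0:ℝ) τ, 0 < qI r)
    (ψ : ℝ → ℝ) (hψ : ∀ r, ψ r = qI r - qP r)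
    (Y : ℝ → ℝ → ℝ) (hY : ∀ r p, Y r p = n * S r * ((1 - p) * qP r + p * qI r))
    (hY_pos : ∀ p ∈ Set.Icc (0:ℝ) 1, ∀ r ∈ Set.Icc (0:ℝ) τ, 0 < Y r p)
    (Var : ℝ → ℝ → ℝ)
    (hVar : ∀ t p, Var t p = S t ^ 2 * ∫ r in (0:ℝ)..t, f r / (Y r p * S r))
    (t : ℝ) (ht : t ∈ Set.Ioc 0 τ)
    (hψ_ne : ∃ r₀ ∈ Set.Ioo (0:ℝ) t, ψ r₀ ≠ 0) :
    StrictConvexOn ℝ (Set.Icc (0:ℝ) 1) (fun p => Var t p) :=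
  km_variance_strictConvexOn_general τ n hn f S qP qI hf_cont hS_cont hqP_cont hqI_cont hf_pos
    hS_pos ψ hψ Y hY hY_pos Var hVar t ht hψ_ne
end

section
/- (Proposition 1, optimality condition.) Fix t ∈ (0, τ]. If π* ∈ (0, 1) satisfies Var(t, π*) ≤ Var(t, π) for all π ∈ [0, 1], then the functions γ(r) = f(r)/Y(r, π*)² and ψ(r) are orthogonal over [0, t], i.e. ∫₀^t f(r)·ψ(r)/Y(r, π*)² dr = 0. -/
/-! Since `Y(r, π)` is affine in `π`, differentiation under the integral sign (dominated on
`π ∈ (0, 1)` through `Y(r, π) ≥ n S(r) min (qP r) (qI r)`) gives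
`∂Var/∂π (t, π*) = -n S(t)² ∫₀ᵗ f ψ / Y(r, π*)²`, and this derivative vanishes at an interior
minimum. -/

open Set MeasureTheory intervalIntegral Topology

theorem min_le_sub_mul_add_mul {x y p : ℝ} (hp : p ∈ Icc (0 : ℝ) 1) :
    min x y ≤ (1 - p) * x + p * y := by
  nlinarith [min_le_left x y, min_le_right x y, hp.1, hp.2]

theorem hasDerivAt_div_sub_mul_add_mul (w x y : ℝ) {p : ℝ} (hp : (1 - p) * x + p * y ≠ 0) :
    HasDerivAt (fun q => w / ((1 - q) * x + q * y)) (-(w * (y - x)) / ((1 - p) * x + p * y) ^ 2)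
      p := by
  have hden : HasDerivAt (fun q => (1 - q) * x + q * y) (y - x) p :=
    ((((hasDerivAt_id' p).const_sub 1).mul_const x).add
      ((hasDerivAt_id' p).mul_const y)).congr_deriv (by ring)
  exact ((hasDerivAt_const p w).div hden hp).congr_deriv (by ring)

section

variable {a b : ℝ} {w A B : ℝ → ℝ}

theorem continuousOn_div_sub_mul_add_mul (hw : ContinuousOn w (uIcc a b))
    (hA : ContinuousOn A (uIcc a b)) (hB : ContinuousOn B (uIcc a b))
    (hA_pos : ∀ r ∈ uIcc a b, 0 < A r) (hB_pos : ∀ r ∈ uIcc a b, 0 < B r)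
    {p : ℝ} (hp : p ∈ Icc (0 : ℝ) 1) (k : ℕ) :
    ContinuousOn (fun r => w r / ((1 - p) * A r + p * B r) ^ k) (uIcc a b) :=
  hw.div (((continuousOn_const.mul hA).add (continuousOn_const.mul hB)).pow k) fun r hr =>
    (pow_pos ((lt_min (hA_pos r hr) (hB_pos r hr)).trans_le (min_le_sub_mul_add_mul hp)) k).ne'

theorem hasDerivAt_intervalIntegral_div_sub_mul_add_mul (hw : ContinuousOn w (uIcc a b))
    (hA : ContinuousOn A (uIcc a b)) (hB : ContinuousOn B (uIcc a b))
    (hA_pos : ∀ r ∈ uIcc a b, 0 < A r) (hB_pos : ∀ r ∈ uIcc a b, 0 < B r)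
    {p : ℝ} (hp : p ∈ Ioo (0 : ℝ) 1) :
    HasDerivAt (fun q => ∫ r in a..b, w r / ((1 - q) * A r + q * B r))
      (∫ r in a..b, -(w r * (B r - A r)) / ((1 - p) * A r + p * B r) ^ 2) p := by
  have hmin_pos : ∀ r ∈ uIcc a b, 0 < min (A r) (B r) := fun r hr =>
    lt_min (hA_pos r hr) (hB_pos r hr)
  have hw' : ContinuousOn (fun r => -(w r * (B r - A r))) (uIcc a b) := (hw.mul (hB.sub hA)).neg
  have hF : ∀ q ∈ Icc (0 : ℝ) 1,
      ContinuousOn (fun r => w r / ((1 - q) * A r + q * B r)) (uIcc a b) := fun q hq => by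
    simpa using continuousOn_div_sub_mul_add_mul hw hA hB hA_pos hB_pos hq 1
  have hF' : ∀ q ∈ Icc (0 : ℝ) 1, ContinuousOn
      (fun r => -(w r * (B r - A r)) / ((1 - q) * A r + q * B r) ^ 2) (uIcc a b) :=
    fun q hq => continuousOn_div_sub_mul_add_mul hw' hA hB hA_pos hB_pos hq 2
  have hbound : ContinuousOn (fun r => |w r * (B r - A r)| / min (A r) (B r) ^ 2) (uIcc a b) :=
    (hw.mul (hB.sub hA)).abs.div ((hA.inf hB).pow 2) fun r hr => (pow_pos (hmin_pos r hr) 2).ne'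
  have hs : Ioo (0 : ℝ) 1 ∈ 𝓝 p := Ioo_mem_nhds hp.1 hp.2
  refine (hasDerivAt_integral_of_dominated_loc_of_deriv_le
    (F' := fun q r => -(w r * (B r - A r)) / ((1 - q) * A r + q * B r) ^ 2) hs
    (Filter.eventually_of_mem hs fun q hq => ((hF q (Ioo_subset_Icc_self hq)).mono
      uIoc_subset_uIcc).aestronglyMeasurable measurableSet_uIoc)
    ((hF p (Ioo_subset_Icc_self hp)).intervalIntegrable)
    (((hF' p (Ioo_subset_Icc_self hp)).mono uIoc_subset_uIcc).aestronglyMeasurable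
      measurableSet_uIoc)
    (Filter.Eventually.of_forall fun r hr q hq => ?_) hbound.intervalIntegrable
    (Filter.Eventually.of_forall fun r hr q hq => ?_)).2 <;>
  have hle := min_le_sub_mul_add_mul (x := A r) (y := B r) (Ioo_subset_Icc_self hq) <;>
  have hmin_r := hmin_pos r (uIoc_subset_uIcc hr)
  · rw [norm_div, norm_neg, Real.norm_eq_abs, norm_pow, Real.norm_eq_abs,
      abs_of_pos (hmin_r.trans_le hle)]
    gcongr
  · exact hasDerivAt_div_sub_mul_add_mul _ _ _ (hmin_r.trans_le hle).ne'

end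

theorem km_variance_interior_min_orthogonality_general
    (τ n : ℝ) (hn : 0 < n)
    (f S qP qI : ℝ → ℝ)
    (hf_cont : ContinuousOn f (Set.Icc 0 τ)) (hS_cont : ContinuousOn S (Set.Icc 0 τ))
    (hqP_cont : ContinuousOn qP (Set.Icc 0 τ)) (hqI_cont : ContinuousOn qI (Set.Icc 0 τ))
    (hS_pos : ∀ r ∈ Set.Icc (0:ℝ) τ, 0 < S r)
    (hqP_pos : ∀ r ∈ Set.Icc (0:ℝ) τ, 0 < qP r) (hqI_pos : ∀ r ∈ Set.Icc (0:ℝ) τ, 0 < qI r)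
    (ψ : ℝ → ℝ) (hψ : ∀ r, ψ r = qI r - qP r)
    (Y : ℝ → ℝ → ℝ) (hY : ∀ r p, Y r p = n * S r * ((1 - p) * qP r + p * qI r))
    (Var : ℝ → ℝ → ℝ)
    (hVar : ∀ t p, Var t p = S t ^ 2 * ∫ r in (0:ℝ)..t, f r / (Y r p * S r))
    (t : ℝ) (ht : t ∈ Set.Ioc 0 τ)
    (pstar : ℝ) (hpstar : pstar ∈ Set.Ioo (0:ℝ) 1)
    (hmin : ∀ p ∈ Set.Icc (0:ℝ) 1, Var t pstar ≤ Var t p) :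
    ∫ r in (0:ℝ)..t, f r * ψ r / (Y r pstar) ^ 2 = 0 := by
  have hsub : uIcc 0 t ⊆ Icc 0 τ := by
    rw [uIcc_of_le ht.1.le]
    exact Icc_subset_Icc_right ht.2
  set w : ℝ → ℝ := fun r => f r / (n * S r ^ 2)
  have hw : ContinuousOn w (uIcc 0 t) :=
    (hf_cont.mono hsub).div (continuousOn_const.mul ((hS_cont.mono hsub).pow 2)) fun r hr =>
      (mul_pos hn (pow_pos (hS_pos r (hsub hr)) 2)).ne'
  have hVar_eq :
      Var t = fun p => S t ^ 2 * ∫ r in (0:ℝ)..t, w r / ((1 - p) * qP r + p * qI r) := by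
    funext p
    simp only [hVar, hY, w, div_div]
    congr 2 with r
    ring
  have hderiv := (hasDerivAt_intervalIntegral_div_sub_mul_add_mul hw (hqP_cont.mono hsub)
    (hqI_cont.mono hsub) (fun r hr => hqP_pos r (hsub hr)) (fun r hr => hqI_pos r (hsub hr))
    hpstar).const_mul (S t ^ 2)
  rw [← hVar_eq] at hderiv
  have hlocal : IsLocalMin (Var t) pstar :=
    Filter.eventually_of_mem (Icc_mem_nhds hpstar.1 hpstar.2) hmin
  have hSt : S t ^ 2 ≠ 0 := (pow_pos (hS_pos t (Ioc_subset_Icc_self ht)) 2).ne'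
  have hzero := (mul_eq_zero.mp (hlocal.hasDerivAt_eq_zero hderiv)).resolve_left hSt
  calc ∫ r in (0:ℝ)..t, f r * ψ r / (Y r pstar) ^ 2
      = ∫ r in (0:ℝ)..t, -(w r * (qI r - qP r)) / ((1 - pstar) * qP r + pstar * qI r) ^ 2
          * (-n⁻¹) := by
        congr 1 with r
        simp only [hψ, hY, w]
        generalize (1 - pstar) * qP r + pstar * qI r = m
        ring
    _ = 0 := by rw [intervalIntegral.integral_mul_const, hzero, zero_mul]

/-- Proposition 1, optimality condition: Fix t ∈ (0, τ]. If π* ∈ (0, 1)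
minimizes Var(t, ·) over [0, 1], then γ(r) = f(r)/Y(r, π*)² and ψ(r) are orthogonal over
[0, t], i.e. ∫₀ᵗ f(r)·ψ(r)/Y(r, π*)² dr = 0. -/
theorem km_variance_interior_min_orthogonality
    (τ θ n c : ℝ) (hτ : 0 < τ) (hθ : 0 < θ) (hn : 0 < n) (hc : 0 < c)
    (f S qP qI : ℝ → ℝ)
    (hf_cont : ContinuousOn f (Set.Icc 0 τ)) (hS_cont : ContinuousOn S (Set.Icc 0 τ))
    (hqP_cont : ContinuousOn qP (Set.Icc 0 τ)) (hqI_cont : ContinuousOn qI (Set.Icc 0 τ))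
    (hf_pos : ∀ r ∈ Set.Icc (0:ℝ) τ, 0 < f r) (hS_pos : ∀ r ∈ Set.Icc (0:ℝ) τ, 0 < S r)
    (hqP_pos : ∀ r ∈ Set.Icc (0:ℝ) τ, 0 < qP r) (hqI_pos : ∀ r ∈ Set.Icc (0:ℝ) τ, 0 < qI r)
    (ψ : ℝ → ℝ) (hψ : ∀ r, ψ r = qI r - qP r)
    (Y : ℝ → ℝ → ℝ) (hY : ∀ r p, Y r p = n * S r * ((1 - p) * qP r + p * qI r))
    (hY_pos : ∀ p ∈ Set.Icc (0:ℝ) 1, ∀ r ∈ Set.Icc (0:ℝ) τ, 0 < Y r p)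
    (Var : ℝ → ℝ → ℝ)
    (hVar : ∀ t p, Var t p = S t ^ 2 * ∫ r in (0:ℝ)..t, f r / (Y r p * S r))
    (t : ℝ) (ht : t ∈ Set.Ioc 0 τ)
    (pstar : ℝ) (hpstar : pstar ∈ Set.Ioo (0:ℝ) 1)
    (hmin : ∀ p ∈ Set.Icc (0:ℝ) 1, Var t pstar ≤ Var t p) :
    ∫ r in (0:ℝ)..t, f r * ψ r / (Y r pstar) ^ 2 = 0 :=
  km_variance_interior_min_orthogonality_general τ n hn f S qP qI hf_cont hS_cont hqP_cont hqI_cont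
    hS_pos hqP_pos hqI_pos ψ hψ Y hY Var hVar t ht pstar hpstar hmin
end

section
/- (Proposition 1, boundary case.) Fix t ∈ (0, τ]. If for every π ∈ (0, 1) the orthogonality condition fails, i.e. ∫₀^t f(r)·ψ(r)/Y(r, π)² dr ≠ 0, then the minimum of Var(t, ·) over [0, 1] is attained at a boundary point: min(Var(t, 0), Var(t, 1)) ≤ Var(t, π) for every π ∈ [0, 1]. -/
/-!
`Var(t, π)` is `S(t)²` times `g(π) = ∫₀ᵗ f / (S · Y(·, π))`, and `S · Y(·, π)` is affine in `π`,
so differentiating under the integral sign gives `g'(π) = -n ∫₀ᵗ f ψ / Y(·, π)²`. The hypothesis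
says that `g'` never vanishes on `(0, 1)`, so the minimum of the continuous function `g` on
`[0, 1]` cannot be interior.
-/

open Set Filter Topology MeasureTheory

theorem IsCompact.exists_pos_eventually_le_add_mul {K : Set ℝ} (hK : IsCompact K)
    {v w : ℝ → ℝ} {p₀ : ℝ} (hv : ContinuousOn v K) (hw : ContinuousOn w K)
    (hpos : ∀ r ∈ K, 0 < v r + p₀ * w r) :
    ∃ m > 0, ∀ᶠ p in 𝓝 p₀, ∀ r ∈ K, m ≤ v r + p * w r := by
  rcases K.eq_empty_or_nonempty with rfl | hKne
  · exact ⟨1, one_pos, by simp⟩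
  obtain ⟨r₀, hr₀, hmin⟩ :=
    hK.exists_isMinOn hKne (hv.add (continuousOn_const.mul hw))
  obtain ⟨B, hB⟩ := hK.exists_bound_of_continuousOn hw
  set m := v r₀ + p₀ * w r₀
  have hm : 0 < m := hpos r₀ hr₀
  refine ⟨m / 2, half_pos hm, ?_⟩
  have hnear : ∀ᶠ p in 𝓝 p₀, |p - p₀| * B < m / 2 := by
    refine Tendsto.eventually_lt_const (half_pos hm) ?_
    exact ((continuous_sub_right p₀).abs.mul continuous_const).tendsto' _ _ (by simp)
  filter_upwards [hnear] with p hp r hr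
  have hle : m ≤ v r + p₀ * w r := hmin hr
  have hdev : |(p - p₀) * w r| ≤ |p - p₀| * B := by
    rw [abs_mul]
    exact mul_le_mul_of_nonneg_left (hB r hr) (abs_nonneg _)
  have hsplit : v r + p * w r = (v r + p₀ * w r) + (p - p₀) * w r := by ring
  linarith [neg_abs_le ((p - p₀) * w r)]

theorem hasDerivAt_div_add_mul_s5 {c v w p : ℝ} (hp : v + p * w ≠ 0) :
    HasDerivAt (fun p => c / (v + p * w)) (-(c * w / (v + p * w) ^ 2)) p := by
  have hden : HasDerivAt (fun p => v + p * w) w p := by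
    simpa using ((hasDerivAt_id p).mul_const w).const_add v
  exact ((hasDerivAt_const p c).div hden hp).congr_deriv (by ring)

theorem hasDerivAt_intervalIntegral_div_add_mul_s5 {a b p₀ : ℝ} {u v w : ℝ → ℝ}
    (hu : ContinuousOn u (uIcc a b)) (hv : ContinuousOn v (uIcc a b))
    (hw : ContinuousOn w (uIcc a b)) (hpos : ∀ r ∈ uIcc a b, 0 < v r + p₀ * w r) :
    HasDerivAt (fun p => ∫ r in a..b, u r / (v r + p * w r))
      (-∫ r in a..b, u r * w r / (v r + p₀ * w r) ^ 2) p₀ := by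
  obtain ⟨m, hm, hev⟩ := isCompact_uIcc.exists_pos_eventually_le_add_mul hv hw hpos
  obtain ⟨U, hU⟩ := isCompact_uIcc.exists_bound_of_continuousOn hu
  obtain ⟨B, hB⟩ := isCompact_uIcc.exists_bound_of_continuousOn hw
  have hden : ∀ p, ContinuousOn (fun r => v r + p * w r) (uIcc a b) :=
    fun p => hv.add (continuousOn_const.mul hw)
  have hden₀ : ∀ r ∈ uIcc a b, v r + p₀ * w r ≠ 0 := fun r hr => (hpos r hr).ne'
  have key := intervalIntegral.hasDerivAt_integral_of_dominated_loc_of_deriv_le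
    (μ := volume) (a := a) (b := b)
    (F := fun p r => u r / (v r + p * w r)) (F' := fun p r => -(u r * w r / (v r + p * w r) ^ 2))
    (bound := fun _ => U * B / m ^ 2) hev ?meas ?int ?meas' ?bound intervalIntegrable_const ?diff
  · simpa only [intervalIntegral.integral_neg] using key.2
  case meas =>
    filter_upwards [hev] with p hp
    have hne : ∀ r ∈ uIcc a b, v r + p * w r ≠ 0 := fun r hr => (hm.trans_le (hp r hr)).ne'
    exact ((hu.div (hden p) hne).mono uIoc_subset_uIcc).aestronglyMeasurable measurableSet_uIoc
  case int => exact (hu.div (hden p₀) hden₀).intervalIntegrable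
  case meas' =>
    exact ((((hu.mul hw).div ((hden p₀).pow 2) fun r hr => pow_ne_zero 2 (hden₀ r hr)).neg).mono
      uIoc_subset_uIcc).aestronglyMeasurable measurableSet_uIoc
  case bound =>
    refine ae_of_all _ fun r hr p hp => ?_
    have hr' := uIoc_subset_uIcc hr
    have hmp := hp r hr'
    rw [norm_neg, norm_div, norm_mul, norm_pow, Real.norm_of_nonneg (hm.le.trans hmp)]
    have hU0 : 0 ≤ U := (norm_nonneg _).trans (hU r hr')
    have hB0 : 0 ≤ B := (norm_nonneg _).trans (hB r hr')
    exact div_le_div₀ (mul_nonneg hU0 hB0) (mul_le_mul (hU r hr') (hB r hr') (norm_nonneg _) hU0)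
      (pow_pos hm 2) (pow_le_pow_left₀ hm.le hmp 2)
  case diff =>
    refine ae_of_all _ fun r hr p hp => ?_
    exact hasDerivAt_div_add_mul_s5 (hm.trans_le (hp r (uIoc_subset_uIcc hr))).ne'

theorem min_le_of_hasDerivAt_ne_zero {g g' : ℝ → ℝ} {a b : ℝ} (hab : a ≤ b)
    (hg : ContinuousOn g (Icc a b)) (hd : ∀ x ∈ Ioo a b, HasDerivAt g (g' x) x)
    (hne : ∀ x ∈ Ioo a b, g' x ≠ 0) :
    ∀ x ∈ Icc a b, min (g a) (g b) ≤ g x := by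
  obtain ⟨x₀, hx₀, hmin⟩ := isCompact_Icc.exists_isMinOn (nonempty_Icc.2 hab) hg
  have hx₀_end : x₀ = a ∨ x₀ = b := by
    by_contra! hint
    have hx₀' : x₀ ∈ Ioo a b := ⟨hx₀.1.lt_of_ne' hint.1, hx₀.2.lt_of_ne hint.2⟩
    exact hne x₀ hx₀'
      ((hmin.isLocalMin (Icc_mem_nhds hx₀'.1 hx₀'.2)).hasDerivAt_eq_zero (hd x₀ hx₀'))
  intro x hx
  rcases hx₀_end with rfl | rfl
  · exact (min_le_left _ _).trans (hmin hx)
  · exact (min_le_right _ _).trans (hmin hx)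

theorem km_variance_boundary_min_general
    (τ n : ℝ) (hn : 0 < n)
    (f S qP qI : ℝ → ℝ)
    (hf_cont : ContinuousOn f (Set.Icc 0 τ)) (hS_cont : ContinuousOn S (Set.Icc 0 τ))
    (hqP_cont : ContinuousOn qP (Set.Icc 0 τ)) (hqI_cont : ContinuousOn qI (Set.Icc 0 τ))
    (hS_pos : ∀ r ∈ Set.Icc (0:ℝ) τ, 0 < S r)
    (ψ : ℝ → ℝ) (hψ : ∀ r, ψ r = qI r - qP r)
    (Y : ℝ → ℝ → ℝ) (hY : ∀ r p, Y r p = n * S r * ((1 - p) * qP r + p * qI r))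
    (hY_pos : ∀ p ∈ Set.Icc (0:ℝ) 1, ∀ r ∈ Set.Icc (0:ℝ) τ, 0 < Y r p)
    (Var : ℝ → ℝ → ℝ)
    (hVar : ∀ t p, Var t p = S t ^ 2 * ∫ r in (0:ℝ)..t, f r / (Y r p * S r))
    (t : ℝ) (ht : t ∈ Set.Ioc 0 τ)
    (hne : ∀ p ∈ Set.Ioo (0:ℝ) 1, (∫ r in (0:ℝ)..t, f r * ψ r / (Y r p) ^ 2) ≠ 0) :
    ∀ p ∈ Set.Icc (0:ℝ) 1, min (Var t 0) (Var t 1) ≤ Var t p := by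
  set v : ℝ → ℝ := fun r => n * S r ^ 2 * qP r
  set w : ℝ → ℝ := fun r => n * S r ^ 2 * ψ r
  have hYS : ∀ r p, Y r p * S r = v r + p * w r := fun r p => by
    simp only [v, w, hY, hψ]; ring
  have hsub : uIcc 0 t ⊆ Icc 0 τ := by
    rw [uIcc_of_le ht.1.le]; exact Icc_subset_Icc_right ht.2
  have hS : ContinuousOn S (uIcc 0 t) := hS_cont.mono hsub
  have hv : ContinuousOn v (uIcc 0 t) :=
    (continuousOn_const.mul (hS.pow 2)).mul (hqP_cont.mono hsub)
  have hw : ContinuousOn w (uIcc 0 t) := (continuousOn_const.mul (hS.pow 2)).mul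
    (((hqI_cont.sub hqP_cont).mono hsub).congr fun r _ => hψ r)
  have hderiv : ∀ p ∈ Icc (0:ℝ) 1, HasDerivAt (fun p => ∫ r in 0..t, f r / (Y r p * S r))
      (-(n * ∫ r in 0..t, f r * ψ r / Y r p ^ 2)) p := by
    intro p hp
    have hpos : ∀ r ∈ uIcc 0 t, 0 < Y r p * S r := fun r hr =>
      mul_pos (hY_pos p hp r (hsub hr)) (hS_pos r (hsub hr))
    simp only [hYS] at hpos ⊢
    convert hasDerivAt_intervalIntegral_div_add_mul_s5 (hf_cont.mono hsub) hv hw hpos using 2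
    rw [← intervalIntegral.integral_const_mul]
    refine intervalIntegral.integral_congr fun r hr => ?_
    have hYr := (hY_pos p hp r (hsub hr)).ne'
    have hSr := (hS_pos r (hsub hr)).ne'
    simp only [← hYS, w]
    field_simp
  have hmin := min_le_of_hasDerivAt_ne_zero zero_le_one
    (fun p hp => (hderiv p hp).continuousAt.continuousWithinAt)
    (fun p hp => hderiv p (Ioo_subset_Icc_self hp))
    (fun p hp => neg_ne_zero.2 (mul_ne_zero hn.ne' (hne p hp)))
  intro p hp
  simp only [hVar, ← mul_min_of_nonneg _ _ (sq_nonneg (S t))]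
  exact mul_le_mul_of_nonneg_left (hmin p hp) (sq_nonneg _)

/-- Proposition 1, boundary case: Fix t ∈ (0, τ]. If for every π ∈ (0, 1)
the orthogonality condition fails, i.e. ∫₀ᵗ f(r)·ψ(r)/Y(r, π)² dr ≠ 0, then the minimum
of Var(t, ·) over [0, 1] is attained at a boundary point. -/
theorem km_variance_boundary_min
    (τ θ n c : ℝ) (hτ : 0 < τ) (hθ : 0 < θ) (hn : 0 < n) (hc : 0 < c)
    (f S qP qI : ℝ → ℝ)
    (hf_cont : ContinuousOn f (Set.Icc 0 τ)) (hS_cont : ContinuousOn S (Set.Icc 0 τ))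
    (hqP_cont : ContinuousOn qP (Set.Icc 0 τ)) (hqI_cont : ContinuousOn qI (Set.Icc 0 τ))
    (hf_pos : ∀ r ∈ Set.Icc (0:ℝ) τ, 0 < f r) (hS_pos : ∀ r ∈ Set.Icc (0:ℝ) τ, 0 < S r)
    (hqP_pos : ∀ r ∈ Set.Icc (0:ℝ) τ, 0 < qP r) (hqI_pos : ∀ r ∈ Set.Icc (0:ℝ) τ, 0 < qI r)
    (ψ : ℝ → ℝ) (hψ : ∀ r, ψ r = qI r - qP r)
    (Y : ℝ → ℝ → ℝ) (hY : ∀ r p, Y r p = n * S r * ((1 - p) * qP r + p * qI r))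
    (hY_pos : ∀ p ∈ Set.Icc (0:ℝ) 1, ∀ r ∈ Set.Icc (0:ℝ) τ, 0 < Y r p)
    (Var : ℝ → ℝ → ℝ)
    (hVar : ∀ t p, Var t p = S t ^ 2 * ∫ r in (0:ℝ)..t, f r / (Y r p * S r))
    (t : ℝ) (ht : t ∈ Set.Ioc 0 τ)
    (hne : ∀ p ∈ Set.Ioo (0:ℝ) 1, (∫ r in (0:ℝ)..t, f r * ψ r / (Y r p) ^ 2) ≠ 0) :
    ∀ p ∈ Set.Icc (0:ℝ) 1, min (Var t 0) (Var t 1) ≤ Var t p :=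
  km_variance_boundary_min_general τ n hn f S qP qI hf_cont hS_cont hqP_cont hqI_cont hS_pos ψ hψ Y
    hY hY_pos Var hVar t ht hne
end

section
/- (Necessary condition for an interior optimum.) Fix t ∈ (0, τ]. If π* ∈ (0, 1) satisfies Var(t, π*) ≤ Var(t, π) for all π ∈ [0, 1], then there exists r ∈ (0, t) with ψ(r) = 0 (i.e., the at-risk probabilities of incident and prevalent patients must cross somewhere in (0, t)). -/
/-!
If `ψ = qI - qP` had no zero in `(0, t)`, it would have constant sign there by the intermediate
value theorem. Since `Y(r, π)` is affine in `π` with slope `n S(r) ψ(r)`, moving `π*` to the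
endpoint `1` (if `ψ > 0`) or `0` (if `ψ < 0`) strictly increases `Y` on `(0, t)`, hence strictly
decreases the integrand of `Var(t, ·)` there, and so strictly decreases `Var(t, ·)`,
contradicting the minimality of `π*`.
-/

open Set MeasureTheory

theorem IsPreconnected.forall_lt_or_forall_gt_of_ne {X α : Type*} [TopologicalSpace X]
    [LinearOrder α] [TopologicalSpace α] [OrderClosedTopology α] {s : Set X}
    (hs : IsPreconnected s) {g : X → α} (hg : ContinuousOn g s) {c : α}
    (hne : ∀ x ∈ s, g x ≠ c) : (∀ x ∈ s, c < g x) ∨ (∀ x ∈ s, g x < c) := by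
  by_contra! h
  obtain ⟨⟨a, ha, hac⟩, ⟨b, hb, hcb⟩⟩ := h
  obtain ⟨x, hx, hxc⟩ := hs.intermediate_value ha hb hg ⟨hac, hcb⟩
  exact hne x hx hxc

theorem intervalIntegral.integral_lt_integral_of_lt_on_Ioo {g h : ℝ → ℝ} {a b : ℝ}
    (hab : a < b) (hg : IntervalIntegrable g volume a b) (hh : IntervalIntegrable h volume a b)
    (hlt : ∀ x ∈ Ioo a b, g x < h x) :
    ∫ x in a..b, g x < ∫ x in a..b, h x := by
  have hpos := intervalIntegral_pos_of_pos_on (hh.sub hg) (fun x hx => sub_pos.2 (hlt x hx)) hab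
  rwa [intervalIntegral.integral_sub hh hg, sub_pos] at hpos

/-- The paper's `Y(r, π)`, with `π = p` the fraction of incident patients in the sample. -/
def atRisk (n : ℝ) (S qP qI : ℝ → ℝ) (r p : ℝ) : ℝ :=
  n * S r * ((1 - p) * qP r + p * qI r)

section atRisk

variable {n : ℝ} {f S qP qI : ℝ → ℝ}

theorem atRisk_sub_atRisk (r p q : ℝ) :
    atRisk n S qP qI r q - atRisk n S qP qI r p = n * S r * ((q - p) * (qI r - qP r)) := by
  unfold atRisk
  ring

theorem continuousOn_div_atRisk_mul {s : Set ℝ} {p : ℝ} (hf : ContinuousOn f s)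
    (hS : ContinuousOn S s) (hqP : ContinuousOn qP s) (hqI : ContinuousOn qI s)
    (hne : ∀ r ∈ s, atRisk n S qP qI r p * S r ≠ 0) :
    ContinuousOn (fun r => f r / (atRisk n S qP qI r p * S r)) s :=
  hf.div (by unfold atRisk; fun_prop) hne

theorem div_atRisk_mul_lt {r p q : ℝ} (hn : 0 < n) (hf : 0 < f r) (hS : 0 < S r)
    (hp : 0 < atRisk n S qP qI r p) (hpq : 0 < (q - p) * (qI r - qP r)) :
    f r / (atRisk n S qP qI r q * S r) < f r / (atRisk n S qP qI r p * S r) := by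
  have hpq' : atRisk n S qP qI r p < atRisk n S qP qI r q := by
    rw [← sub_pos, atRisk_sub_atRisk]
    positivity
  exact div_lt_div_of_pos_left hf (mul_pos hp hS) (mul_lt_mul_of_pos_right hpq' hS)

theorem integral_div_atRisk_mul_lt {t p q : ℝ} (hn : 0 < n) (ht : 0 < t)
    (hf : ContinuousOn f (Icc 0 t)) (hS : ContinuousOn S (Icc 0 t))
    (hqP : ContinuousOn qP (Icc 0 t)) (hqI : ContinuousOn qI (Icc 0 t))
    (hf_pos : ∀ r ∈ Ioo 0 t, 0 < f r) (hS_pos : ∀ r ∈ Icc 0 t, 0 < S r)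
    (hp : ∀ r ∈ Icc 0 t, 0 < atRisk n S qP qI r p)
    (hq : ∀ r ∈ Icc 0 t, 0 < atRisk n S qP qI r q)
    (hpq : ∀ r ∈ Ioo 0 t, 0 < (q - p) * (qI r - qP r)) :
    ∫ r in 0..t, f r / (atRisk n S qP qI r q * S r) <
      ∫ r in 0..t, f r / (atRisk n S qP qI r p * S r) := by
  have hintegrable : ∀ p', (∀ r ∈ Icc 0 t, 0 < atRisk n S qP qI r p') →
      IntervalIntegrable (fun r => f r / (atRisk n S qP qI r p' * S r)) volume 0 t :=
    fun p' hp' => ContinuousOn.intervalIntegrable <| by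
      rw [uIcc_of_le ht.le]
      exact continuousOn_div_atRisk_mul hf hS hqP hqI
        fun r hr => (mul_pos (hp' r hr) (hS_pos r hr)).ne'
  refine intervalIntegral.integral_lt_integral_of_lt_on_Ioo ht (hintegrable q hq)
    (hintegrable p hp) fun r hr => ?_
  exact div_atRisk_mul_lt hn (hf_pos r hr) (hS_pos r (Ioo_subset_Icc_self hr))
    (hp r (Ioo_subset_Icc_self hr)) (hpq r hr)

end atRisk

theorem km_variance_interior_min_psi_crosses_zero_general
    (τ n : ℝ) (hn : 0 < n)
    (f S qP qI : ℝ → ℝ)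
    (hf_cont : ContinuousOn f (Set.Icc 0 τ)) (hS_cont : ContinuousOn S (Set.Icc 0 τ))
    (hqP_cont : ContinuousOn qP (Set.Icc 0 τ)) (hqI_cont : ContinuousOn qI (Set.Icc 0 τ))
    (hf_pos : ∀ r ∈ Set.Icc (0:ℝ) τ, 0 < f r) (hS_pos : ∀ r ∈ Set.Icc (0:ℝ) τ, 0 < S r)
    (ψ : ℝ → ℝ) (hψ : ∀ r, ψ r = qI r - qP r)
    (Y : ℝ → ℝ → ℝ) (hY : ∀ r p, Y r p = n * S r * ((1 - p) * qP r + p * qI r))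
    (hY_pos : ∀ p ∈ Set.Icc (0:ℝ) 1, ∀ r ∈ Set.Icc (0:ℝ) τ, 0 < Y r p)
    (Var : ℝ → ℝ → ℝ)
    (hVar : ∀ t p, Var t p = S t ^ 2 * ∫ r in (0:ℝ)..t, f r / (Y r p * S r))
    (t : ℝ) (ht : t ∈ Set.Ioc 0 τ)
    (pstar : ℝ) (hpstar : pstar ∈ Set.Ioo (0:ℝ) 1)
    (hmin : ∀ p ∈ Set.Icc (0:ℝ) 1, Var t pstar ≤ Var t p) :
    ∃ r ∈ Set.Ioo (0:ℝ) t, ψ r = 0 := by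
  obtain rfl : ψ = fun r => qI r - qP r := funext hψ
  obtain rfl : Y = atRisk n S qP qI := funext₂ hY
  obtain ⟨ht0, htτ⟩ := ht
  have hsub : Icc 0 t ⊆ Icc 0 τ := Icc_subset_Icc_right htτ
  have hsub' : Ioo 0 t ⊆ Icc 0 τ := Ioo_subset_Icc_self.trans hsub
  by_contra! hno
  obtain ⟨q, hq, hqψ⟩ :
      ∃ q ∈ Icc (0:ℝ) 1, ∀ r ∈ Ioo 0 t, 0 < (q - pstar) * (qI r - qP r) := by
    rcases isPreconnected_Ioo.forall_lt_or_forall_gt_of_ne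
      ((hqI_cont.sub hqP_cont).mono hsub') hno with hpos | hneg
    · exact ⟨1, right_mem_Icc.2 zero_le_one,
        fun r hr => mul_pos (by linarith [hpstar.2]) (hpos r hr)⟩
    · exact ⟨0, left_mem_Icc.2 zero_le_one,
        fun r hr => mul_pos_of_neg_of_neg (by linarith [hpstar.1]) (hneg r hr)⟩
  have hintegral := integral_div_atRisk_mul_lt hn ht0 (hf_cont.mono hsub) (hS_cont.mono hsub)
    (hqP_cont.mono hsub) (hqI_cont.mono hsub) (fun r hr => hf_pos r (hsub' hr))
    (fun r hr => hS_pos r (hsub hr))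
    (fun r hr => hY_pos pstar (Ioo_subset_Icc_self hpstar) r (hsub hr))
    (fun r hr => hY_pos q hq r (hsub hr)) hqψ
  have hSt : 0 < S t ^ 2 := pow_pos (hS_pos t (hsub (right_mem_Icc.2 ht0.le))) 2
  have hVar_lt : Var t q < Var t pstar := by
    rw [hVar, hVar]
    exact mul_lt_mul_of_pos_left hintegral hSt
  exact (hmin q hq).not_gt hVar_lt

/-- Necessary condition for an interior optimum: Fix t ∈ (0, τ]. If
π* ∈ (0, 1) minimizes Var(t, ·) over [0, 1], then there exists r ∈ (0, t) with ψ(r) = 0. -/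
theorem km_variance_interior_min_psi_crosses_zero
    (τ θ n c : ℝ) (hτ : 0 < τ) (hθ : 0 < θ) (hn : 0 < n) (hc : 0 < c)
    (f S qP qI : ℝ → ℝ)
    (hf_cont : ContinuousOn f (Set.Icc 0 τ)) (hS_cont : ContinuousOn S (Set.Icc 0 τ))
    (hqP_cont : ContinuousOn qP (Set.Icc 0 τ)) (hqI_cont : ContinuousOn qI (Set.Icc 0 τ))
    (hf_pos : ∀ r ∈ Set.Icc (0:ℝ) τ, 0 < f r) (hS_pos : ∀ r ∈ Set.Icc (0:ℝ) τ, 0 < S r)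
    (hqP_pos : ∀ r ∈ Set.Icc (0:ℝ) τ, 0 < qP r) (hqI_pos : ∀ r ∈ Set.Icc (0:ℝ) τ, 0 < qI r)
    (ψ : ℝ → ℝ) (hψ : ∀ r, ψ r = qI r - qP r)
    (Y : ℝ → ℝ → ℝ) (hY : ∀ r p, Y r p = n * S r * ((1 - p) * qP r + p * qI r))
    (hY_pos : ∀ p ∈ Set.Icc (0:ℝ) 1, ∀ r ∈ Set.Icc (0:ℝ) τ, 0 < Y r p)
    (Var : ℝ → ℝ → ℝ)
    (hVar : ∀ t p, Var t p = S t ^ 2 * ∫ r in (0:ℝ)..t, f r / (Y r p * S r))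
    (t : ℝ) (ht : t ∈ Set.Ioc 0 τ)
    (pstar : ℝ) (hpstar : pstar ∈ Set.Ioo (0:ℝ) 1)
    (hmin : ∀ p ∈ Set.Icc (0:ℝ) 1, Var t pstar ≤ Var t p) :
    ∃ r ∈ Set.Ioo (0:ℝ) t, ψ r = 0 :=
  km_variance_interior_min_psi_crosses_zero_general τ n hn f S qP qI hf_cont hS_cont hqP_cont
    hqI_cont hf_pos hS_pos ψ hψ Y hY hY_pos Var hVar t ht pstar hpstar hmin
end

section
/- Fix t ∈ (0, τ]. If ψ(r) > 0 for every r ∈ (0, t), then the function π ↦ Var(t, π) is strictly decreasing on [0, 1]; in particular Var(t, 1) < Var(t, π) for every π ∈ [0, 1), so the all-incident cohort π = 1 uniquely minimizes the variance. -/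
/-!
Since `Y(r, π) = n S(r) (qP(r) + π ψ(r))`, positivity of `ψ` on `(0, t)` makes `π ↦ Y(r, π)`
strictly increasing there, so the integrand `f / (Y S)` strictly decreases in `π` at every interior
point of `[0, t]`. The integrands are continuous, so the integrals decrease strictly too, and the
factor `S(t)² > 0` preserves this.
-/

open Set

theorem strictMono_convexCombination {α : Type*} [Field α] [LinearOrder α] [IsStrictOrderedRing α]
    {a b : α} (hab : a < b) : StrictMono fun p : α => (1 - p) * a + p * b := fun p q hpq => by
  nlinarith [mul_lt_mul_of_pos_right hpq (sub_pos.2 hab)]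

theorem strictAntiOn_const_div {α : Type*} [Field α] [LinearOrder α] [IsStrictOrderedRing α]
    {g : α → α} {s : Set α} {c : α} (hc : 0 < c) (hg_pos : ∀ p ∈ s, 0 < g p)
    (hg : StrictMonoOn g s) : StrictAntiOn (fun p => c / g p) s :=
  fun _ hp _ hq hpq => div_lt_div_of_pos_left hc (hg_pos _ hp) (hg hp hq hpq)

theorem strictAntiOn_intervalIntegral {s : Set ℝ} {a b : ℝ} (hab : a < b) {F : ℝ → ℝ → ℝ}
    (hF_cont : ∀ p ∈ s, ContinuousOn (F p) (Icc a b))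
    (hF_anti : ∀ r ∈ Ioo a b, StrictAntiOn (fun p => F p r) s) :
    StrictAntiOn (fun p => ∫ r in a..b, F p r) s := by
  intro p hp q hq hpq
  have hint : ∀ p ∈ s, IntervalIntegrable (F p) MeasureTheory.volume a b := fun p hp =>
    (hF_cont p hp).intervalIntegrable_of_Icc hab.le
  rw [← sub_pos, ← intervalIntegral.integral_sub (hint p hp) (hint q hq)]
  exact intervalIntegral.intervalIntegral_pos_of_pos_on ((hint p hp).sub (hint q hq))
    (fun r hr => sub_pos.2 (hF_anti r hr hp hq hpq)) hab

theorem km_variance_strictAntiOn_of_psi_pos_general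
    (τ n : ℝ) (hn : 0 < n)
    (f S qP qI : ℝ → ℝ)
    (hf_cont : ContinuousOn f (Set.Icc 0 τ)) (hS_cont : ContinuousOn S (Set.Icc 0 τ))
    (hqP_cont : ContinuousOn qP (Set.Icc 0 τ)) (hqI_cont : ContinuousOn qI (Set.Icc 0 τ))
    (hf_pos : ∀ r ∈ Set.Icc (0:ℝ) τ, 0 < f r) (hS_pos : ∀ r ∈ Set.Icc (0:ℝ) τ, 0 < S r)
    (ψ : ℝ → ℝ) (hψ : ∀ r, ψ r = qI r - qP r)
    (Y : ℝ → ℝ → ℝ) (hY : ∀ r p, Y r p = n * S r * ((1 - p) * qP r + p * qI r))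
    (hY_pos : ∀ p ∈ Set.Icc (0:ℝ) 1, ∀ r ∈ Set.Icc (0:ℝ) τ, 0 < Y r p)
    (Var : ℝ → ℝ → ℝ)
    (hVar : ∀ t p, Var t p = S t ^ 2 * ∫ r in (0:ℝ)..t, f r / (Y r p * S r))
    (t : ℝ) (ht : t ∈ Set.Ioc 0 τ)
    (hψ_pos : ∀ r ∈ Set.Ioo (0:ℝ) t, 0 < ψ r) :
    StrictAntiOn (fun p => Var t p) (Set.Icc (0:ℝ) 1) ∧
    ∀ p ∈ Set.Ico (0:ℝ) 1, Var t 1 < Var t p := by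
  obtain ⟨ht0, htτ⟩ := ht
  have hsub : Icc 0 t ⊆ Icc 0 τ := Icc_subset_Icc le_rfl htτ
  have hYS_mono : ∀ r ∈ Ioo 0 t, StrictMono fun p => Y r p * S r := fun r hr => by
    have hS := hS_pos r (hsub (Ioo_subset_Icc_self hr))
    have hqP_lt_qI : qP r < qI r := sub_pos.1 (hψ r ▸ hψ_pos r hr)
    simpa only [hY] using
      ((strictMono_convexCombination hqP_lt_qI).const_mul (mul_pos hn hS)).mul_const hS
  have hintegral_anti :
      StrictAntiOn (fun p => ∫ r in (0:ℝ)..t, f r / (Y r p * S r)) (Icc 0 1) := by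
    refine strictAntiOn_intervalIntegral ht0 (fun p hp => ?_) (fun r hr => ?_)
    · have hYS_cont : ContinuousOn (fun r => Y r p * S r) (Icc 0 τ) := by
        simp only [hY]
        fun_prop
      exact (hf_cont.div hYS_cont fun r hr =>
        (mul_pos (hY_pos p hp r hr) (hS_pos r hr)).ne').mono hsub
    · have hr' := hsub (Ioo_subset_Icc_self hr)
      exact strictAntiOn_const_div (hf_pos r hr')
        (fun p hp => mul_pos (hY_pos p hp r hr') (hS_pos r hr')) ((hYS_mono r hr).strictMonoOn _)
  have hVar_anti : StrictAntiOn (fun p => Var t p) (Icc 0 1) := by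
    simp only [hVar]
    exact (strictMono_mul_left_of_pos (pow_pos (hS_pos t ⟨ht0.le, htτ⟩) 2)).comp_strictAntiOn
      hintegral_anti
  exact ⟨hVar_anti, fun p hp => hVar_anti ⟨hp.1, hp.2.le⟩ ⟨zero_le_one, le_rfl⟩ hp.2⟩

/-- Fix t ∈ (0, τ]. If ψ(r) > 0 for every r ∈ (0, t), then π ↦ Var(t, π) is
strictly decreasing on [0, 1]; in particular Var(t, 1) < Var(t, π) for every π ∈ [0, 1),
so the all-incident cohort π = 1 uniquely minimizes the variance. -/
theorem km_variance_strictAntiOn_of_psi_pos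
    (τ θ n c : ℝ) (hτ : 0 < τ) (hθ : 0 < θ) (hn : 0 < n) (hc : 0 < c)
    (f S qP qI : ℝ → ℝ)
    (hf_cont : ContinuousOn f (Set.Icc 0 τ)) (hS_cont : ContinuousOn S (Set.Icc 0 τ))
    (hqP_cont : ContinuousOn qP (Set.Icc 0 τ)) (hqI_cont : ContinuousOn qI (Set.Icc 0 τ))
    (hf_pos : ∀ r ∈ Set.Icc (0:ℝ) τ, 0 < f r) (hS_pos : ∀ r ∈ Set.Icc (0:ℝ) τ, 0 < S r)
    (hqP_pos : ∀ r ∈ Set.Icc (0:ℝ) τ, 0 < qP r) (hqI_pos : ∀ r ∈ Set.Icc (0:ℝ) τ, 0 < qI r)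
    (ψ : ℝ → ℝ) (hψ : ∀ r, ψ r = qI r - qP r)
    (Y : ℝ → ℝ → ℝ) (hY : ∀ r p, Y r p = n * S r * ((1 - p) * qP r + p * qI r))
    (hY_pos : ∀ p ∈ Set.Icc (0:ℝ) 1, ∀ r ∈ Set.Icc (0:ℝ) τ, 0 < Y r p)
    (Var : ℝ → ℝ → ℝ)
    (hVar : ∀ t p, Var t p = S t ^ 2 * ∫ r in (0:ℝ)..t, f r / (Y r p * S r))
    (t : ℝ) (ht : t ∈ Set.Ioc 0 τ)
    (hψ_pos : ∀ r ∈ Set.Ioo (0:ℝ) t, 0 < ψ r) :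
    StrictAntiOn (fun p => Var t p) (Set.Icc (0:ℝ) 1) ∧
    ∀ p ∈ Set.Ico (0:ℝ) 1, Var t 1 < Var t p :=
  km_variance_strictAntiOn_of_psi_pos_general τ n hn f S qP qI hf_cont hS_cont hqP_cont hqI_cont
    hf_pos hS_pos ψ hψ Y hY hY_pos Var hVar t ht hψ_pos
end

section
/- For every π ∈ (0, 1), the weighted total-variance objective K(π) = ∫₀^τ W(t)·Var(t, π) dt is differentiable at π with derivative equal to −n·∫₀^τ W(t)·V(t, π) dt, where V(t, π) = S(t)²·∫₀^t f(r)·ψ(r)/Y(r, π)² dr. -/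
/-!
Differentiate under the integral sign twice. Since `Y r π` is affine in `π` with slope
`n S(r) ψ(r)`, the quotient rule gives `∂π (f / (Y S)) = -n f ψ / Y²`. This derivative is
continuous on the compact set `[0, τ] × [0, 1]`, where `Y > 0`, hence bounded; that bound
dominates the inner differentiation and also bounds `V` uniformly, which dominates the outer one.
-/

open Set Filter Topology MeasureTheory Function
open scoped Interval

theorem hasDerivAt_intervalIntegral_of_abs_le {F F' : ℝ → ℝ → ℝ} {s : Set ℝ} {a b x₀ C : ℝ}
    (hs : s ∈ 𝓝 x₀) (hF : ∀ x ∈ s, ContinuousOn (F x) [[a, b]])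
    (hF' : ContinuousOn (F' x₀) [[a, b]]) (hF'_le : ∀ x ∈ s, ∀ r ∈ [[a, b]], |F' x r| ≤ C)
    (hderiv : ∀ x ∈ s, ∀ r ∈ [[a, b]], HasDerivAt (F · r) (F' x r) x) :
    HasDerivAt (fun x => ∫ r in a..b, F x r) (∫ r in a..b, F' x₀ r) x₀ :=
  (intervalIntegral.hasDerivAt_integral_of_dominated_loc_of_deriv_le (bound := fun _ => C) hs
    (eventually_of_mem hs fun x hx =>
      ((hF x hx).mono uIoc_subset_uIcc).aestronglyMeasurable measurableSet_uIoc)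
    (hF x₀ (mem_of_mem_nhds hs)).intervalIntegrable
    ((hF'.mono uIoc_subset_uIcc).aestronglyMeasurable measurableSet_uIoc)
    (ae_of_all _ fun r hr x hx => hF'_le x hx r (uIoc_subset_uIcc hr))
    intervalIntegrable_const
    (ae_of_all _ fun r hr x hx => hderiv x hx r (uIoc_subset_uIcc hr))).2

theorem ContinuousOn.primitive_Icc {h : ℝ → ℝ} {a b : ℝ} (hab : a ≤ b)
    (hh : ContinuousOn h (Icc a b)) : ContinuousOn (fun t => ∫ r in a..t, h r) (Icc a b) := by
  rw [← uIcc_of_le hab] at hh ⊢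
  exact intervalIntegral.continuousOn_primitive_interval (hh.integrableOn_compact isCompact_uIcc)

theorem exists_forall_abs_sq_mul_integral_le {S : ℝ → ℝ} {G : ℝ → ℝ → ℝ} {s : Set ℝ} {τ C : ℝ}
    (hS : ContinuousOn S (Icc 0 τ)) (hG : ∀ x ∈ s, ∀ r ∈ Icc 0 τ, |G x r| ≤ C) :
    ∃ B, ∀ x ∈ s, ∀ t ∈ Icc 0 τ, |S t ^ 2 * ∫ r in 0..t, G x r| ≤ B := by
  obtain ⟨M, hM⟩ := isCompact_Icc.exists_bound_of_continuousOn hS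
  refine ⟨M ^ 2 * (C * τ), fun x hx t ht => ?_⟩
  have hint : |∫ r in 0..t, G x r| ≤ C * τ := calc
    _ ≤ C * |t - 0| := by
        simpa only [Real.norm_eq_abs] using
          intervalIntegral.norm_integral_le_of_norm_le_const (f := G x) fun r hr =>
            hG x hx r (by rw [uIoc_of_le ht.1] at hr; exact ⟨hr.1.le, hr.2.trans ht.2⟩)
    _ ≤ C * τ := by
        rw [sub_zero, abs_of_nonneg ht.1]
        exact mul_le_mul_of_nonneg_left ht.2 ((abs_nonneg _).trans (hG x hx t ht))
  rw [abs_mul, abs_pow]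
  exact mul_le_mul (pow_le_pow_left₀ (abs_nonneg _) (hM t ht) 2) hint (abs_nonneg _)
    (sq_nonneg _)

section AtRisk

variable {τ n : ℝ} {f S qP qI ψ : ℝ → ℝ} {Y : ℝ → ℝ → ℝ}

theorem hasDerivAt_div_atRisk (hψ : ∀ r, ψ r = qI r - qP r)
    (hY : ∀ r p, Y r p = n * S r * ((1 - p) * qP r + p * qI r)) {r x : ℝ} (hS : S r ≠ 0)
    (hYx : Y r x ≠ 0) :
    HasDerivAt (fun p => f r / (Y r p * S r)) (-n * (f r * ψ r / Y r x ^ 2)) x := by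
  have hlin : HasDerivAt (fun p => (1 - p) * qP r + p * qI r) (ψ r) x :=
    ((((hasDerivAt_id' x).const_sub 1).mul_const (qP r)).add
      ((hasDerivAt_id' x).mul_const (qI r))).congr_deriv (by rw [hψ]; ring)
  have hden := (hlin.const_mul (n * S r)).mul_const (S r)
  simp only [← hY] at hden
  exact ((hasDerivAt_const x (f r)).div hden (mul_ne_zero hYx hS)).congr_deriv
    (by field_simp; ring)

theorem continuousOn_atRisk (hY : ∀ r p, Y r p = n * S r * ((1 - p) * qP r + p * qI r))
    (hS : ContinuousOn S (Icc 0 τ)) (hqP : ContinuousOn qP (Icc 0 τ))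
    (hqI : ContinuousOn qI (Icc 0 τ)) : ContinuousOn (uncurry Y) (Icc 0 τ ×ˢ Icc 0 1) := by
  have hfst : MapsTo Prod.fst (Icc 0 τ ×ˢ Icc (0:ℝ) 1) (Icc 0 τ) := fun z hz => hz.1
  simp only [uncurry_def, hY]
  exact (continuousOn_const.mul (hS.comp continuousOn_fst hfst)).mul
    (((continuousOn_const.sub continuousOn_snd).mul (hqP.comp continuousOn_fst hfst)).add
      (continuousOn_snd.mul (hqI.comp continuousOn_fst hfst)))

theorem continuousOn_div_atRisk_mul_s8 (hf : ContinuousOn f (Icc 0 τ)) (hS : ContinuousOn S (Icc 0 τ))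
    (hY : ContinuousOn (uncurry Y) (Icc 0 τ ×ˢ Icc 0 1)) (hS_pos : ∀ r ∈ Icc (0:ℝ) τ, 0 < S r)
    (hY_pos : ∀ p ∈ Icc (0:ℝ) 1, ∀ r ∈ Icc 0 τ, 0 < Y r p) {x : ℝ} (hx : x ∈ Icc 0 1) :
    ContinuousOn (fun r => f r / (Y r x * S r)) (Icc 0 τ) :=
  hf.div ((hY.uncurry_right x hx).mul hS) fun r hr =>
    (mul_pos (hY_pos x hx r hr) (hS_pos r hr)).ne'

theorem continuousOn_div_atRisk_sq (hf : ContinuousOn f (Icc 0 τ)) (hψ : ContinuousOn ψ (Icc 0 τ))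
    (hY : ContinuousOn (uncurry Y) (Icc 0 τ ×ˢ Icc 0 1))
    (hY_pos : ∀ p ∈ Icc (0:ℝ) 1, ∀ r ∈ Icc 0 τ, 0 < Y r p) {x : ℝ} (hx : x ∈ Icc 0 1) :
    ContinuousOn (fun r => f r * ψ r / Y r x ^ 2) (Icc 0 τ) :=
  (hf.mul hψ).div ((hY.uncurry_right x hx).pow 2) fun r hr => (pow_pos (hY_pos x hx r hr) 2).ne'

theorem exists_forall_abs_div_atRisk_sq_le (hf : ContinuousOn f (Icc 0 τ))
    (hψ : ContinuousOn ψ (Icc 0 τ)) (hY : ContinuousOn (uncurry Y) (Icc 0 τ ×ˢ Icc 0 1))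
    (hY_pos : ∀ p ∈ Icc (0:ℝ) 1, ∀ r ∈ Icc 0 τ, 0 < Y r p) :
    ∃ C, ∀ x ∈ Icc (0:ℝ) 1, ∀ r ∈ Icc 0 τ, |f r * ψ r / Y r x ^ 2| ≤ C := by
  have hfst : MapsTo Prod.fst (Icc 0 τ ×ˢ Icc (0:ℝ) 1) (Icc 0 τ) := fun z hz => hz.1
  have hG : ContinuousOn (fun z : ℝ × ℝ => f z.1 * ψ z.1 / Y z.1 z.2 ^ 2) (Icc 0 τ ×ˢ Icc 0 1) :=
    ((hf.comp continuousOn_fst hfst).mul (hψ.comp continuousOn_fst hfst)).div (hY.pow 2)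
      fun z hz => (pow_pos (hY_pos z.2 hz.2 z.1 hz.1) 2).ne'
  obtain ⟨C, hC⟩ := (isCompact_Icc.prod isCompact_Icc).exists_bound_of_continuousOn hG
  exact ⟨C, fun x hx r hr => hC (r, x) ⟨hr, hx⟩⟩

theorem hasDerivAt_integral_div_atRisk (hψ : ∀ r, ψ r = qI r - qP r)
    (hY : ∀ r p, Y r p = n * S r * ((1 - p) * qP r + p * qI r)) (hf : ContinuousOn f (Icc 0 τ))
    (hS : ContinuousOn S (Icc 0 τ)) (hψc : ContinuousOn ψ (Icc 0 τ))
    (hYc : ContinuousOn (uncurry Y) (Icc 0 τ ×ˢ Icc 0 1))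
    (hS_pos : ∀ r ∈ Icc (0:ℝ) τ, 0 < S r) (hY_pos : ∀ p ∈ Icc (0:ℝ) 1, ∀ r ∈ Icc 0 τ, 0 < Y r p)
    {q t : ℝ} (hq : q ∈ Ioo 0 1) (ht : t ∈ Icc 0 τ) :
    HasDerivAt (fun x => ∫ r in 0..t, f r / (Y r x * S r))
      (-n * ∫ r in 0..t, f r * ψ r / Y r q ^ 2) q := by
  obtain ⟨C, hC⟩ := exists_forall_abs_div_atRisk_sq_le hf hψc hYc hY_pos
  have hsub : [[0, t]] ⊆ Icc 0 τ := by
    rw [uIcc_of_le ht.1]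
    exact Icc_subset_Icc_right ht.2
  rw [← intervalIntegral.integral_const_mul]
  refine hasDerivAt_intervalIntegral_of_abs_le (F := fun x r => f r / (Y r x * S r))
    (F' := fun x r => -n * (f r * ψ r / Y r x ^ 2)) (C := |n| * C) (Icc_mem_nhds hq.1 hq.2)
    (fun x hx => ?_) ?_ (fun x hx r hr => ?_) (fun x hx r hr => ?_)
  · exact (continuousOn_div_atRisk_mul_s8 hf hS hYc hS_pos hY_pos hx).mono hsub
  · exact (continuousOn_const.mul (continuousOn_div_atRisk_sq hf hψc hYc hY_pos
      (Ioo_subset_Icc_self hq))).mono hsub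
  · rw [abs_mul, abs_neg]
    exact mul_le_mul_of_nonneg_left (hC x hx r (hsub hr)) (abs_nonneg n)
  · exact hasDerivAt_div_atRisk hψ hY (hS_pos r (hsub hr)).ne' (hY_pos x hx r (hsub hr)).ne'

end AtRisk

theorem weighted_objective_hasDerivAt_general
    (τ n : ℝ) (hτ : 0 < τ)
    (f S qP qI : ℝ → ℝ)
    (hf_cont : ContinuousOn f (Set.Icc 0 τ)) (hS_cont : ContinuousOn S (Set.Icc 0 τ))
    (hqP_cont : ContinuousOn qP (Set.Icc 0 τ)) (hqI_cont : ContinuousOn qI (Set.Icc 0 τ))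
    (hS_pos : ∀ r ∈ Set.Icc (0:ℝ) τ, 0 < S r)
    (ψ : ℝ → ℝ) (hψ : ∀ r, ψ r = qI r - qP r)
    (Y : ℝ → ℝ → ℝ) (hY : ∀ r p, Y r p = n * S r * ((1 - p) * qP r + p * qI r))
    (hY_pos : ∀ p ∈ Set.Icc (0:ℝ) 1, ∀ r ∈ Set.Icc (0:ℝ) τ, 0 < Y r p)
    (Var : ℝ → ℝ → ℝ)
    (hVar : ∀ t p, Var t p = S t ^ 2 * ∫ r in (0:ℝ)..t, f r / (Y r p * S r))
(W : ℝ → ℝ) (hW_cont : ContinuousOn W (Set.Icc 0 τ))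
    (V : ℝ → ℝ → ℝ)
    (hV : ∀ t p, V t p = S t ^ 2 * ∫ r in (0:ℝ)..t, f r * ψ r / (Y r p) ^ 2)
    (K : ℝ → ℝ) (hK : ∀ p, K p = ∫ t in (0:ℝ)..τ, W t * Var t p)
    (p : ℝ) (hp : p ∈ Set.Ioo (0:ℝ) 1) :
    HasDerivAt K (-(n * ∫ t in (0:ℝ)..τ, W t * V t p)) p := by
  have hψ_cont : ContinuousOn ψ (Icc 0 τ) := (hqI_cont.sub hqP_cont).congr fun r _ => hψ r
  have hY_cont := continuousOn_atRisk hY hS_cont hqP_cont hqI_cont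
  have hVar_deriv : ∀ q ∈ Ioo (0:ℝ) 1, ∀ t ∈ Icc 0 τ, HasDerivAt (Var t ·) (-(n * V t q)) q := by
    intro q hq t ht
    simp only [hVar]
    exact ((hasDerivAt_integral_div_atRisk hψ hY hf_cont hS_cont hψ_cont hY_cont hS_pos hY_pos
      hq ht).const_mul _).congr_deriv (by rw [hV]; ring)
  obtain ⟨C, hC⟩ := exists_forall_abs_div_atRisk_sq_le hf_cont hψ_cont hY_cont hY_pos
  obtain ⟨B, hB⟩ := exists_forall_abs_sq_mul_integral_le hS_cont hC
  obtain ⟨MW, hMW⟩ := isCompact_Icc.exists_bound_of_continuousOn hW_cont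
  have hτ' : [[0, τ]] = Icc 0 τ := uIcc_of_le hτ.le
  rw [show K = _ from funext hK]
  refine (hasDerivAt_intervalIntegral_of_abs_le (F := fun x t => W t * Var t x)
    (F' := fun x t => W t * -(n * V t x)) (C := MW * (|n| * B)) (Ioo_mem_nhds hp.1 hp.2)
    (fun x hx => ?_) ?_ (fun x hx t ht => ?_) (fun x hx t ht => ?_)).congr_deriv ?_
  · rw [hτ']
    refine hW_cont.mul (ContinuousOn.congr ?_ fun t _ => hVar t x)
    exact (hS_cont.pow 2).mul ((continuousOn_div_atRisk_mul_s8 hf_cont hS_cont hY_cont hS_pos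
      hY_pos (Ioo_subset_Icc_self hx)).primitive_Icc hτ.le)
  · rw [hτ']
    refine hW_cont.mul (continuousOn_const.mul (ContinuousOn.congr ?_ fun t _ => hV t p)).neg
    exact (hS_cont.pow 2).mul ((continuousOn_div_atRisk_sq hf_cont hψ_cont hY_cont hY_pos
      (Ioo_subset_Icc_self hp)).primitive_Icc hτ.le)
  · rw [hτ'] at ht
    rw [abs_mul, abs_neg, abs_mul, hV]
    exact mul_le_mul (hMW t ht) (mul_le_mul_of_nonneg_left (hB x (Ioo_subset_Icc_self hx) t ht)
      (abs_nonneg n)) (by positivity) ((abs_nonneg _).trans (hMW t ht))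
  · rw [hτ'] at ht
    exact (hVar_deriv x hx t ht).const_mul (W t)
  · simp only [mul_neg, intervalIntegral.integral_neg, mul_left_comm (W _) n,
      intervalIntegral.integral_const_mul]

/-- For every π ∈ (0, 1), the weighted total-variance objective
K(π) = ∫₀^τ W(t)·Var(t, π) dt is differentiable at π with derivative equal to
−n·∫₀^τ W(t)·V(t, π) dt, where V(t, π) = S(t)²·∫₀ᵗ f(r)·ψ(r)/Y(r, π)² dr. -/
theorem weighted_objective_hasDerivAt
    (τ θ n c : ℝ) (hτ : 0 < τ) (hθ : 0 < θ) (hn : 0 < n) (hc : 0 < c)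
    (f S qP qI : ℝ → ℝ)
    (hf_cont : ContinuousOn f (Set.Icc 0 τ)) (hS_cont : ContinuousOn S (Set.Icc 0 τ))
    (hqP_cont : ContinuousOn qP (Set.Icc 0 τ)) (hqI_cont : ContinuousOn qI (Set.Icc 0 τ))
    (hf_pos : ∀ r ∈ Set.Icc (0:ℝ) τ, 0 < f r) (hS_pos : ∀ r ∈ Set.Icc (0:ℝ) τ, 0 < S r)
    (hqP_pos : ∀ r ∈ Set.Icc (0:ℝ) τ, 0 < qP r) (hqI_pos : ∀ r ∈ Set.Icc (0:ℝ) τ, 0 < qI r)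
    (ψ : ℝ → ℝ) (hψ : ∀ r, ψ r = qI r - qP r)
    (Y : ℝ → ℝ → ℝ) (hY : ∀ r p, Y r p = n * S r * ((1 - p) * qP r + p * qI r))
    (hY_pos : ∀ p ∈ Set.Icc (0:ℝ) 1, ∀ r ∈ Set.Icc (0:ℝ) τ, 0 < Y r p)
    (Var : ℝ → ℝ → ℝ)
    (hVar : ∀ t p, Var t p = S t ^ 2 * ∫ r in (0:ℝ)..t, f r / (Y r p * S r))
(W : ℝ → ℝ) (hW_cont : ContinuousOn W (Set.Icc 0 τ))
    (hW_pos : ∀ t ∈ Set.Icc (0:ℝ) τ, 0 < W t)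
    (hW_int : (∫ t in (0:ℝ)..τ, W t) = 1)
    (V : ℝ → ℝ → ℝ)
    (hV : ∀ t p, V t p = S t ^ 2 * ∫ r in (0:ℝ)..t, f r * ψ r / (Y r p) ^ 2)
    (K : ℝ → ℝ) (hK : ∀ p, K p = ∫ t in (0:ℝ)..τ, W t * Var t p)
    (p : ℝ) (hp : p ∈ Set.Ioo (0:ℝ) 1) :
    HasDerivAt K (-(n * ∫ t in (0:ℝ)..τ, W t * V t p)) p :=
  weighted_objective_hasDerivAt_general τ n hτ f S qP qI hf_cont hS_cont hqP_cont hqI_cont hS_pos ψ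
    hψ Y hY hY_pos Var hVar W hW_cont V hV K hK p hp
end

section
/- The weighted total-variance objective K(π) = ∫₀^τ W(t)·Var(t, π) dt is convex on the interval [0, 1]. -/
/-!
For each `r`, the at-risk function `p ↦ Y r p` is affine and positive on `[0, 1]`, so the
integrand `f r / (Y r p * S r)` of `Var t p` is a nonnegative multiple of the inverse of a
positive affine function, hence convex in `p`. Convexity survives integration in `r` and
multiplication by `S t ^ 2`, and then again integration in `t` against the positive weight `W`.
-/

open Set MeasureTheory

theorem convexOn_inv_comp_affineMap {E : Type*} [AddCommGroup E] [Module ℝ E]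
    (g : E →ᵃ[ℝ] ℝ) {s : Set E} (hs : Convex ℝ s) (hpos : ∀ x ∈ s, 0 < g x) :
    ConvexOn ℝ s fun x => (g x)⁻¹ := by
  simpa only [Function.comp_def, zpow_neg_one] using
    ((convexOn_zpow (𝕜 := ℝ) (-1)).comp_affineMap g).subset hpos hs

theorem convexOn_intervalIntegral {E : Type*} [AddCommGroup E] [Module ℝ E] {μ : Measure ℝ}
    {s : Set E} {g : ℝ → E → ℝ} {a b : ℝ} (hab : a ≤ b)
    (hint : ∀ x ∈ s, IntervalIntegrable (fun r => g r x) μ a b)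
    (hg : ∀ r ∈ Icc a b, ConvexOn ℝ s (g r)) :
    ConvexOn ℝ s fun x => ∫ r in a..b, g r x ∂μ := by
  refine ⟨(hg a ⟨le_rfl, hab⟩).1, fun x hx y hy α β hα hβ hαβ => ?_⟩
  have hαx := (hint x hx).const_mul α
  have hβy := (hint y hy).const_mul β
  simp only [smul_eq_mul]
  calc ∫ r in a..b, g r (α • x + β • y) ∂μ
      ≤ ∫ r in a..b, α * g r x + β * g r y ∂μ :=
        intervalIntegral.integral_mono_on hab
          (hint _ ((hg a ⟨le_rfl, hab⟩).1 hx hy hα hβ hαβ)) (hαx.add hβy)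
          fun r hr => (hg r hr).2 hx hy hα hβ hαβ
    _ = α * ∫ r in a..b, g r x ∂μ + β * ∫ r in a..b, g r y ∂μ := by
        rw [intervalIntegral.integral_add hαx hβy, intervalIntegral.integral_const_mul,
          intervalIntegral.integral_const_mul]

theorem convexOn_intervalIntegral_of_continuousOn {E : Type*} [AddCommGroup E] [Module ℝ E]
    {s : Set E} {g : ℝ → E → ℝ} {a b : ℝ} (hab : a ≤ b)
    (hcont : ∀ x ∈ s, ContinuousOn (fun r => g r x) (Icc a b))
    (hg : ∀ r ∈ Icc a b, ConvexOn ℝ s (g r)) :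
    ConvexOn ℝ s fun x => ∫ r in a..b, g r x :=
  convexOn_intervalIntegral hab (fun x hx => (hcont x hx).intervalIntegrable_of_Icc hab) hg

theorem continuousOn_primitive_Icc {g : ℝ → ℝ} {a b : ℝ} (hab : a ≤ b)
    (hg : ContinuousOn g (Icc a b)) :
    ContinuousOn (fun t => ∫ r in a..t, g r) (Icc a b) := by
  have hint : IntegrableOn g (uIcc a b) := by
    rw [uIcc_of_le hab]
    exact hg.integrableOn_compact isCompact_Icc
  simpa only [uIcc_of_le hab] using intervalIntegral.continuousOn_primitive_interval hint

theorem weighted_objective_convexOn_general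
    (τ n : ℝ) (hτ : 0 < τ)
    (f S qP qI : ℝ → ℝ)
    (hf_cont : ContinuousOn f (Set.Icc 0 τ)) (hS_cont : ContinuousOn S (Set.Icc 0 τ))
    (hqP_cont : ContinuousOn qP (Set.Icc 0 τ)) (hqI_cont : ContinuousOn qI (Set.Icc 0 τ))
    (hf_pos : ∀ r ∈ Set.Icc (0:ℝ) τ, 0 < f r) (hS_pos : ∀ r ∈ Set.Icc (0:ℝ) τ, 0 < S r)
    (Y : ℝ → ℝ → ℝ) (hY : ∀ r p, Y r p = n * S r * ((1 - p) * qP r + p * qI r))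
    (hY_pos : ∀ p ∈ Set.Icc (0:ℝ) 1, ∀ r ∈ Set.Icc (0:ℝ) τ, 0 < Y r p)
    (Var : ℝ → ℝ → ℝ)
    (hVar : ∀ t p, Var t p = S t ^ 2 * ∫ r in (0:ℝ)..t, f r / (Y r p * S r))
(W : ℝ → ℝ) (hW_cont : ContinuousOn W (Set.Icc 0 τ))
    (hW_pos : ∀ t ∈ Set.Icc (0:ℝ) τ, 0 < W t)
    (K : ℝ → ℝ) (hK : ∀ p, K p = ∫ t in (0:ℝ)..τ, W t * Var t p)
    : ConvexOn ℝ (Set.Icc (0:ℝ) 1) K := by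
  have hY_affine : ∀ r p, Y r p = AffineMap.lineMap (Y r 0) (Y r 1) p := fun r p => by
    simp only [AffineMap.lineMap_apply_ring, hY]
    ring
  have hY_cont : ∀ p, ContinuousOn (Y · p) (Icc 0 τ) := fun p => by
    simp only [hY]
    fun_prop
  have hg_cont : ∀ p ∈ Icc (0:ℝ) 1, ContinuousOn (fun r => f r / (Y r p * S r)) (Icc 0 τ) :=
    fun p hp => hf_cont.div ((hY_cont p).mul hS_cont)
      fun r hr => (mul_pos (hY_pos p hp r hr) (hS_pos r hr)).ne'
  have hg_convex : ∀ r ∈ Icc (0:ℝ) τ, ConvexOn ℝ (Icc 0 1) fun p => f r / (Y r p * S r) :=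
    fun r hr => ((convexOn_inv_comp_affineMap (AffineMap.lineMap (Y r 0) (Y r 1))
        (convex_Icc 0 1) fun p hp => hY_affine r p ▸ hY_pos p hp r hr).smul
      (div_pos (hf_pos r hr) (hS_pos r hr)).le).congr fun p _ => by
        simp only [smul_eq_mul, ← hY_affine]
        ring
  have hVar_cont : ∀ p ∈ Icc (0:ℝ) 1, ContinuousOn (Var · p) (Icc 0 τ) := fun p hp =>
    ((hS_cont.pow 2).mul (continuousOn_primitive_Icc hτ.le (hg_cont p hp))).congr
      fun t _ => hVar t p
  have hVar_convex : ∀ t ∈ Icc (0:ℝ) τ, ConvexOn ℝ (Icc 0 1) (Var t) := fun t ht =>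
    have hsub : Icc 0 t ⊆ Icc 0 τ := Icc_subset_Icc le_rfl ht.2
    ((convexOn_intervalIntegral_of_continuousOn ht.1 (fun p hp => (hg_cont p hp).mono hsub)
        fun r hr => hg_convex r (hsub hr)).smul
      (sq_nonneg (S t))).congr fun p _ => (hVar t p).symm
  exact (convexOn_intervalIntegral_of_continuousOn hτ.le
    (fun p hp => hW_cont.mul (hVar_cont p hp))
    fun t ht => (hVar_convex t ht).smul (hW_pos t ht).le).congr fun p _ => (hK p).symm

/-- The weighted total-variance objective K(π) = ∫₀^τ W(t)·Var(t, π) dt is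
convex on [0, 1]. -/
theorem weighted_objective_convexOn
    (τ θ n c : ℝ) (hτ : 0 < τ) (hθ : 0 < θ) (hn : 0 < n) (hc : 0 < c)
    (f S qP qI : ℝ → ℝ)
    (hf_cont : ContinuousOn f (Set.Icc 0 τ)) (hS_cont : ContinuousOn S (Set.Icc 0 τ))
    (hqP_cont : ContinuousOn qP (Set.Icc 0 τ)) (hqI_cont : ContinuousOn qI (Set.Icc 0 τ))
    (hf_pos : ∀ r ∈ Set.Icc (0:ℝ) τ, 0 < f r) (hS_pos : ∀ r ∈ Set.Icc (0:ℝ) τ, 0 < S r)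
    (hqP_pos : ∀ r ∈ Set.Icc (0:ℝ) τ, 0 < qP r) (hqI_pos : ∀ r ∈ Set.Icc (0:ℝ) τ, 0 < qI r)
    (ψ : ℝ → ℝ) (hψ : ∀ r, ψ r = qI r - qP r)
    (Y : ℝ → ℝ → ℝ) (hY : ∀ r p, Y r p = n * S r * ((1 - p) * qP r + p * qI r))
    (hY_pos : ∀ p ∈ Set.Icc (0:ℝ) 1, ∀ r ∈ Set.Icc (0:ℝ) τ, 0 < Y r p)
    (Var : ℝ → ℝ → ℝ)
    (hVar : ∀ t p, Var t p = S t ^ 2 * ∫ r in (0:ℝ)..t, f r / (Y r p * S r))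
(W : ℝ → ℝ) (hW_cont : ContinuousOn W (Set.Icc 0 τ))
    (hW_pos : ∀ t ∈ Set.Icc (0:ℝ) τ, 0 < W t)
    (hW_int : (∫ t in (0:ℝ)..τ, W t) = 1)
    (V : ℝ → ℝ → ℝ)
    (hV : ∀ t p, V t p = S t ^ 2 * ∫ r in (0:ℝ)..t, f r * ψ r / (Y r p) ^ 2)
    (K : ℝ → ℝ) (hK : ∀ p, K p = ∫ t in (0:ℝ)..τ, W t * Var t p)
    : ConvexOn ℝ (Set.Icc (0:ℝ) 1) K :=
  weighted_objective_convexOn_general τ n hτ f S qP qI hf_cont hS_cont hqP_cont hqI_cont hf_pos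
    hS_pos Y hY hY_pos Var hVar W hW_cont hW_pos K hK
end

section
/- (Necessary condition for an interior optimum of the weighted objective.) If π* ∈ (0, 1) satisfies K(π*) ≤ K(π) for all π ∈ [0, 1], where K(π) = ∫₀^τ W(t)·Var(t, π) dt, then there exists r ∈ (0, τ) with ψ(r) = 0. -/
/-!
If ψ had no zero in (0, τ), it would have constant sign there by the intermediate value
theorem. Since `Y(r, π) = Y(r, 0) + π · n S(r) ψ(r)`, moving π from π* to the endpoint 1
(if ψ > 0) or 0 (if ψ < 0) strictly increases the at-risk function on (0, τ). This strictly
decreases every variance `Var(t, π)` with `t ∈ (0, τ]`, hence strictly decreases `K`,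
contradicting the minimality of π*.
-/

open Set intervalIntegral

theorem IsPreconnected.forall_lt_or_forall_gt_of_forall_ne {X α : Type*}
    [TopologicalSpace X] [LinearOrder α] [TopologicalSpace α] [OrderClosedTopology α]
    {s : Set X} {f : X → α} {c : α}
    (hs : IsPreconnected s) (hf : ContinuousOn f s) (hne : ∀ x ∈ s, f x ≠ c) :
    (∀ x ∈ s, f x < c) ∨ (∀ x ∈ s, c < f x) := by
  by_contra! h
  obtain ⟨⟨a, ha, hac⟩, ⟨b, hb, hcb⟩⟩ := h
  obtain ⟨x, hx, hxc⟩ := hs.intermediate_value hb ha hf ⟨hcb, hac⟩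
  exact hne x hx hxc

theorem intervalIntegral.integral_lt_integral_of_continuousOn_of_forall_Ioo_lt {f g : ℝ → ℝ}
    {a b : ℝ} (hab : a < b) (hf : ContinuousOn f (Icc a b)) (hg : ContinuousOn g (Icc a b))
    (hlt : ∀ x ∈ Ioo a b, f x < g x) : ∫ x in a..b, f x < ∫ x in a..b, g x := by
  have hle : ∀ x ∈ Icc a b, f x ≤ g x := fun x hx => by
    have hx' : x ∈ closure (Ioo a b) := by rwa [closure_Ioo hab.ne]
    exact ContinuousWithinAt.closure_le hx' ((hf x hx).mono Ioo_subset_Icc_self)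
      ((hg x hx).mono Ioo_subset_Icc_self) fun y hy => (hlt y hy).le
  refine integral_lt_integral_of_continuousOn_of_le_of_exists_lt hab hf hg
    (fun x hx => hle x (Ioc_subset_Icc_self hx)) ⟨(a + b) / 2, ?_, hlt _ ?_⟩ <;>
    constructor <;> linarith

noncomputable def kmVariance (f S y : ℝ → ℝ) (t : ℝ) : ℝ :=
  S t ^ 2 * ∫ r in (0 : ℝ)..t, f r / (y r * S r)

section kmVariance

variable {τ : ℝ} {f S y y₁ y₂ : ℝ → ℝ}

theorem continuousOn_kmVariance (hτ : 0 ≤ τ) (hf : ContinuousOn f (Icc 0 τ))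
    (hS : ContinuousOn S (Icc 0 τ)) (hy : ContinuousOn y (Icc 0 τ))
    (hyS : ∀ r ∈ Icc 0 τ, y r * S r ≠ 0) : ContinuousOn (kmVariance f S y) (Icc 0 τ) := by
  have hint : IntervalIntegrable (fun r => f r / (y r * S r)) MeasureTheory.volume 0 τ :=
    (hf.div (hy.mul hS) hyS).intervalIntegrable_of_Icc hτ
  have hprim := continuousOn_primitive_interval' hint left_mem_uIcc
  rw [uIcc_of_le hτ] at hprim
  exact (hS.pow 2).mul hprim

theorem kmVariance_lt_of_forall_Ioo_lt {t : ℝ} (ht : 0 < t) (hf : ContinuousOn f (Icc 0 t))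
    (hS : ContinuousOn S (Icc 0 t)) (hy₁ : ContinuousOn y₁ (Icc 0 t))
    (hy₂ : ContinuousOn y₂ (Icc 0 t)) (hf_pos : ∀ r ∈ Icc 0 t, 0 < f r)
    (hS_pos : ∀ r ∈ Icc 0 t, 0 < S r) (hy₁_pos : ∀ r ∈ Icc 0 t, 0 < y₁ r)
    (hy₂_pos : ∀ r ∈ Icc 0 t, 0 < y₂ r) (hlt : ∀ r ∈ Ioo 0 t, y₁ r < y₂ r) :
    kmVariance f S y₂ t < kmVariance f S y₁ t := by
  have hcont : ∀ y : ℝ → ℝ, ContinuousOn y (Icc 0 t) → (∀ r ∈ Icc 0 t, 0 < y r) →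
      ContinuousOn (fun r => f r / (y r * S r)) (Icc 0 t) := fun y hy hy_pos =>
    hf.div (hy.mul hS) fun r hr => (mul_pos (hy_pos r hr) (hS_pos r hr)).ne'
  have hinner :
      ∫ r in (0 : ℝ)..t, f r / (y₂ r * S r) < ∫ r in (0 : ℝ)..t, f r / (y₁ r * S r) :=
    integral_lt_integral_of_continuousOn_of_forall_Ioo_lt ht (hcont y₂ hy₂ hy₂_pos)
      (hcont y₁ hy₁ hy₁_pos) fun r hr => by
        have hr' := Ioo_subset_Icc_self hr
        exact div_lt_div_of_pos_left (hf_pos r hr') (mul_pos (hy₁_pos r hr') (hS_pos r hr'))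
          (mul_lt_mul_of_pos_right (hlt r hr) (hS_pos r hr'))
  have hSt : 0 < S t ^ 2 := pow_pos (hS_pos t (right_mem_Icc.2 ht.le)) 2
  exact mul_lt_mul_of_pos_left hinner hSt

theorem integral_mul_kmVariance_lt_of_forall_Ioo_lt {W : ℝ → ℝ} (hτ : 0 < τ)
    (hW : ContinuousOn W (Icc 0 τ)) (hf : ContinuousOn f (Icc 0 τ))
    (hS : ContinuousOn S (Icc 0 τ)) (hy₁ : ContinuousOn y₁ (Icc 0 τ))
    (hy₂ : ContinuousOn y₂ (Icc 0 τ)) (hW_pos : ∀ t ∈ Icc 0 τ, 0 < W t)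
    (hf_pos : ∀ r ∈ Icc 0 τ, 0 < f r) (hS_pos : ∀ r ∈ Icc 0 τ, 0 < S r)
    (hy₁_pos : ∀ r ∈ Icc 0 τ, 0 < y₁ r) (hy₂_pos : ∀ r ∈ Icc 0 τ, 0 < y₂ r)
    (hlt : ∀ r ∈ Ioo 0 τ, y₁ r < y₂ r) :
    ∫ t in (0 : ℝ)..τ, W t * kmVariance f S y₂ t <
      ∫ t in (0 : ℝ)..τ, W t * kmVariance f S y₁ t := by
  have hcont : ∀ y : ℝ → ℝ, ContinuousOn y (Icc 0 τ) → (∀ r ∈ Icc 0 τ, 0 < y r) →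
      ContinuousOn (fun t => W t * kmVariance f S y t) (Icc 0 τ) := fun y hy hy_pos =>
    hW.mul (continuousOn_kmVariance hτ.le hf hS hy fun r hr =>
      (mul_pos (hy_pos r hr) (hS_pos r hr)).ne')
  refine integral_lt_integral_of_continuousOn_of_forall_Ioo_lt hτ (hcont y₂ hy₂ hy₂_pos)
    (hcont y₁ hy₁ hy₁_pos) fun t ht =>
      mul_lt_mul_of_pos_left ?_ (hW_pos t (Ioo_subset_Icc_self ht))
  have hsub : Icc 0 t ⊆ Icc 0 τ := Icc_subset_Icc le_rfl ht.2.le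
  exact kmVariance_lt_of_forall_Ioo_lt ht.1 (hf.mono hsub) (hS.mono hsub) (hy₁.mono hsub)
    (hy₂.mono hsub) (fun r hr => hf_pos r (hsub hr)) (fun r hr => hS_pos r (hsub hr))
    (fun r hr => hy₁_pos r (hsub hr)) (fun r hr => hy₂_pos r (hsub hr))
    fun r hr => hlt r ⟨hr.1, hr.2.trans ht.2⟩

end kmVariance

theorem weighted_objective_interior_min_psi_crosses_zero_general
    (τ n : ℝ) (hτ : 0 < τ) (hn : 0 < n)
    (f S qP qI : ℝ → ℝ)
    (hf_cont : ContinuousOn f (Set.Icc 0 τ)) (hS_cont : ContinuousOn S (Set.Icc 0 τ))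
    (hqP_cont : ContinuousOn qP (Set.Icc 0 τ)) (hqI_cont : ContinuousOn qI (Set.Icc 0 τ))
    (hf_pos : ∀ r ∈ Set.Icc (0:ℝ) τ, 0 < f r) (hS_pos : ∀ r ∈ Set.Icc (0:ℝ) τ, 0 < S r)
    (ψ : ℝ → ℝ) (hψ : ∀ r, ψ r = qI r - qP r)
    (Y : ℝ → ℝ → ℝ) (hY : ∀ r p, Y r p = n * S r * ((1 - p) * qP r + p * qI r))
    (hY_pos : ∀ p ∈ Set.Icc (0:ℝ) 1, ∀ r ∈ Set.Icc (0:ℝ) τ, 0 < Y r p)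
    (Var : ℝ → ℝ → ℝ)
    (hVar : ∀ t p, Var t p = S t ^ 2 * ∫ r in (0:ℝ)..t, f r / (Y r p * S r))
(W : ℝ → ℝ) (hW_cont : ContinuousOn W (Set.Icc 0 τ))
    (hW_pos : ∀ t ∈ Set.Icc (0:ℝ) τ, 0 < W t)
    (K : ℝ → ℝ) (hK : ∀ p, K p = ∫ t in (0:ℝ)..τ, W t * Var t p)
    (pstar : ℝ) (hpstar : pstar ∈ Set.Ioo (0:ℝ) 1)
    (hmin : ∀ p ∈ Set.Icc (0:ℝ) 1, K pstar ≤ K p) :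
    ∃ r ∈ Set.Ioo (0:ℝ) τ, ψ r = 0 := by
  by_contra! hne
  have hψ_cont : ContinuousOn ψ (Icc 0 τ) := (hqI_cont.sub hqP_cont).congr fun r _ => hψ r
  have hY_cont (p : ℝ) : ContinuousOn (fun r => Y r p) (Icc 0 τ) :=
    ((continuousOn_const.mul hS_cont).mul ((continuousOn_const.mul hqP_cont).add
      (continuousOn_const.mul hqI_cont))).congr fun r _ => hY r p
  have hK_lt : ∀ p₁ ∈ Icc (0 : ℝ) 1, ∀ p₂ ∈ Icc (0 : ℝ) 1,
      (∀ r ∈ Ioo 0 τ, Y r p₁ < Y r p₂) → K p₂ < K p₁ := by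
    intro p₁ hp₁ p₂ hp₂ hlt
    simp only [hK, hVar]
    exact integral_mul_kmVariance_lt_of_forall_Ioo_lt hτ hW_cont hf_cont hS_cont
      (hY_cont p₁) (hY_cont p₂) hW_pos hf_pos hS_pos (hY_pos p₁ hp₁) (hY_pos p₂ hp₂) hlt
  have hY_sub (r p q : ℝ) : Y r q - Y r p = (q - p) * (n * S r * ψ r) := by
    rw [hY, hY, hψ]; ring
  have hnS : ∀ r ∈ Ioo 0 τ, 0 < n * S r := fun r hr =>
    mul_pos hn (hS_pos r (Ioo_subset_Icc_self hr))
  have hpstar' : pstar ∈ Icc (0 : ℝ) 1 := Ioo_subset_Icc_self hpstar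
  rcases isPreconnected_Ioo.forall_lt_or_forall_gt_of_forall_ne
    (hψ_cont.mono Ioo_subset_Icc_self) hne with hψ_neg | hψ_pos
  · refine (hmin 0 (left_mem_Icc.2 zero_le_one)).not_gt
      (hK_lt pstar hpstar' 0 (left_mem_Icc.2 zero_le_one) fun r hr => sub_pos.1 ?_)
    rw [hY_sub]
    exact mul_pos_of_neg_of_neg (by linarith [hpstar.1])
      (mul_neg_of_pos_of_neg (hnS r hr) (hψ_neg r hr))
  · refine (hmin 1 (right_mem_Icc.2 zero_le_one)).not_gt
      (hK_lt pstar hpstar' 1 (right_mem_Icc.2 zero_le_one) fun r hr => sub_pos.1 ?_)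
    rw [hY_sub]
    exact mul_pos (by linarith [hpstar.2]) (mul_pos (hnS r hr) (hψ_pos r hr))

/-- Necessary condition for an interior optimum of the weighted
objective: If π* ∈ (0, 1) minimizes K(π) = ∫₀^τ W(t)·Var(t, π) dt over [0, 1], then
there exists r ∈ (0, τ) with ψ(r) = 0. -/
theorem weighted_objective_interior_min_psi_crosses_zero
    (τ θ n c : ℝ) (hτ : 0 < τ) (hθ : 0 < θ) (hn : 0 < n) (hc : 0 < c)
    (f S qP qI : ℝ → ℝ)
    (hf_cont : ContinuousOn f (Set.Icc 0 τ)) (hS_cont : ContinuousOn S (Set.Icc 0 τ))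
    (hqP_cont : ContinuousOn qP (Set.Icc 0 τ)) (hqI_cont : ContinuousOn qI (Set.Icc 0 τ))
    (hf_pos : ∀ r ∈ Set.Icc (0:ℝ) τ, 0 < f r) (hS_pos : ∀ r ∈ Set.Icc (0:ℝ) τ, 0 < S r)
    (hqP_pos : ∀ r ∈ Set.Icc (0:ℝ) τ, 0 < qP r) (hqI_pos : ∀ r ∈ Set.Icc (0:ℝ) τ, 0 < qI r)
    (ψ : ℝ → ℝ) (hψ : ∀ r, ψ r = qI r - qP r)
    (Y : ℝ → ℝ → ℝ) (hY : ∀ r p, Y r p = n * S r * ((1 - p) * qP r + p * qI r))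
    (hY_pos : ∀ p ∈ Set.Icc (0:ℝ) 1, ∀ r ∈ Set.Icc (0:ℝ) τ, 0 < Y r p)
    (Var : ℝ → ℝ → ℝ)
    (hVar : ∀ t p, Var t p = S t ^ 2 * ∫ r in (0:ℝ)..t, f r / (Y r p * S r))
(W : ℝ → ℝ) (hW_cont : ContinuousOn W (Set.Icc 0 τ))
    (hW_pos : ∀ t ∈ Set.Icc (0:ℝ) τ, 0 < W t)
    (hW_int : (∫ t in (0:ℝ)..τ, W t) = 1)
    (V : ℝ → ℝ → ℝ)
    (hV : ∀ t p, V t p = S t ^ 2 * ∫ r in (0:ℝ)..t, f r * ψ r / (Y r p) ^ 2)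
    (K : ℝ → ℝ) (hK : ∀ p, K p = ∫ t in (0:ℝ)..τ, W t * Var t p)
    (pstar : ℝ) (hpstar : pstar ∈ Set.Ioo (0:ℝ) 1)
    (hmin : ∀ p ∈ Set.Icc (0:ℝ) 1, K pstar ≤ K p) :
    ∃ r ∈ Set.Ioo (0:ℝ) τ, ψ r = 0 :=
  weighted_objective_interior_min_psi_crosses_zero_general τ n hτ hn f S qP qI hf_cont hS_cont
    hqP_cont hqI_cont hf_pos hS_pos ψ hψ Y hY hY_pos Var hVar W hW_cont hW_pos K hK pstar hpstar
    hmin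
end

section
/- (Appendix A, at-risk probability of a prevalent patient.) Let T and A be independent real-valued random variables on a probability space such that A ≥ 0 almost surely, the law of A has density h with respect to Lebesgue measure and CDF H(a) = P(A ≤ a), and T has continuous survival function S(x) = P(T > x). Fix τ > 0, θ > 0 and t with 0 < t ≤ τ, and assume P(A ≤ T and A < τ) > 0. Then the conditional probability P( T > t and t − θ < A < t | A ≤ T and A < τ ) = S(t)·(H(t) − H(t−θ)) / ∫₀^τ S(a)·h(a) da. -/
/-!
By independence the numerator factors as `P(T > t) · P(t - θ < A < t)`, and the denominator is
`∫_{a < τ} P(T ≥ a) dP_A(a)`. Continuity of `S` makes the law of `T` atomless, so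
`P(T ≥ a) = S a`; the law of `A` has a density, hence is atomless too, so
`P(t - θ < A < t) = H t - H (t - θ)`. Finally `A ≥ 0` a.s. lets the denominator be integrated over
`(0, τ]` only, where it becomes `∫₀^τ S h`.
-/

open MeasureTheory ProbabilityTheory Set

lemma ProbabilityTheory.cdf_eq_one_sub_measureReal_Ioi (μ : Measure ℝ) [IsProbabilityMeasure μ]
    (x : ℝ) : cdf μ x = 1 - μ.real (Ioi x) := by
  rw [cdf_eq_real, ← compl_Ioi, probReal_compl_eq_one_sub measurableSet_Ioi]

lemma ProbabilityTheory.nullSingletonClass_of_continuous_measureReal_Ioi (μ : Measure ℝ)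
    [IsProbabilityMeasure μ] (hcont : Continuous fun x => μ.real (Ioi x)) :
    NullSingletonClass μ := by
  have hcdf : Continuous (cdf μ) := by
    rw [show (cdf μ : ℝ → ℝ) = fun x => 1 - μ.real (Ioi x) from
      funext (cdf_eq_one_sub_measureReal_Ioi μ)]
    exact continuous_const.sub hcont
  refine ⟨fun a => ?_⟩
  rw [← measure_cdf μ, StieltjesFunction.measure_singleton,
    hcdf.continuousWithinAt.leftLim_eq, sub_self, ENNReal.ofReal_zero]

lemma ProbabilityTheory.measureReal_Ioo_eq_cdf_sub {μ : Measure ℝ} [IsProbabilityMeasure μ]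
    [NullSingletonClass μ] {a b : ℝ} (hab : a ≤ b) :
    μ.real (Ioo a b) = cdf μ b - cdf μ a := by
  have hIoc := (cdf μ).measure_Ioc a b
  rw [measure_cdf] at hIoc
  rw [measureReal_def, measure_congr Ioo_ae_eq_Ioc, hIoc,
    ENNReal.toReal_ofReal (sub_nonneg.2 (monotone_cdf μ hab))]

lemma measurableSet_fst_le_snd_and_fst_mem {s : Set ℝ} (hs : MeasurableSet s) :
    MeasurableSet {p : ℝ × ℝ | p.1 ≤ p.2 ∧ p.1 ∈ s} :=
  (measurableSet_le measurable_fst measurable_snd).inter (measurable_fst hs)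

lemma MeasureTheory.Measure.prod_setOf_fst_le_snd_and_fst_mem (μ ν : Measure ℝ) [SFinite ν]
    {s : Set ℝ} (hs : MeasurableSet s) :
    μ.prod ν {p | p.1 ≤ p.2 ∧ p.1 ∈ s} = ∫⁻ x in s, ν (Ici x) ∂μ := by
  rw [Measure.prod_apply (measurableSet_fst_le_snd_and_fst_mem hs), ← lintegral_indicator hs]
  refine lintegral_congr fun x => ?_
  by_cases hx : x ∈ s
  · simp [hx, Set.indicator_of_mem, Ici_def]
  · simp [hx]

lemma ProbabilityTheory.IndepFun.measure_le_and_mem_eq_lintegral {Ω : Type*} [MeasurableSpace Ω]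
    {P : Measure Ω} [IsFiniteMeasure P] {X Y : Ω → ℝ} (hX : Measurable X) (hY : Measurable Y)
    (hXY : IndepFun X Y P) {s : Set ℝ} (hs : MeasurableSet s) :
    P {ω | X ω ≤ Y ω ∧ X ω ∈ s} = ∫⁻ x in s, P.map Y (Ici x) ∂(P.map X) := by
  rw [← Measure.prod_setOf_fst_le_snd_and_fst_mem _ _ hs,
    ← (indepFun_iff_map_prod_eq_prod_map_map hX.aemeasurable hY.aemeasurable).1 hXY,
    Measure.map_apply (hX.prodMk hY) (measurableSet_fst_le_snd_and_fst_mem hs)]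
  rfl

lemma MeasureTheory.Iio_ae_eq_Ioc_of_measure_Iio_eq_zero {μ : Measure ℝ} [NullSingletonClass μ]
    {a b : ℝ} (hab : a ≤ b) (ha : μ (Iio a) = 0) : Iio b =ᵐ[μ] Ioc a b := by
  rw [← Iio_union_Ico_eq_Iio hab, ← empty_union (Ioc a b)]
  exact (ae_eq_empty.2 ha).union Ico_ae_eq_Ioc

lemma ProbabilityTheory.IndepFun.measure_le_and_lt_eq_lintegral_Ioc {Ω : Type*}
    [MeasurableSpace Ω] {P : Measure Ω} [IsFiniteMeasure P] {X Y : Ω → ℝ} (hX : Measurable X)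
    (hY : Measurable Y) (hXY : IndepFun X Y P) [NullSingletonClass (P.map X)]
    [NullSingletonClass (P.map Y)] (hX_nonneg : ∀ᵐ ω ∂P, 0 ≤ X ω) {b : ℝ} (hb : 0 ≤ b) :
    P {ω | X ω ≤ Y ω ∧ X ω < b}
      = ∫⁻ x in Ioc 0 b, ENNReal.ofReal ((P.map Y).real (Ioi x)) ∂(P.map X) := by
  have hX_Iio : P.map X (Iio 0) = 0 := by
    rw [Measure.map_apply hX measurableSet_Iio]
    exact measure_mono_null (fun ω hω => not_le.2 hω) (ae_iff.1 hX_nonneg)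
  calc P {ω | X ω ≤ Y ω ∧ X ω < b} = ∫⁻ x in Iio b, P.map Y (Ici x) ∂(P.map X) :=
        hXY.measure_le_and_mem_eq_lintegral hX hY measurableSet_Iio
    _ = ∫⁻ x in Iio b, ENNReal.ofReal ((P.map Y).real (Ioi x)) ∂(P.map X) := by
        refine lintegral_congr fun x => ?_
        rw [measureReal_def, ENNReal.ofReal_toReal (measure_ne_top _ _),
          measure_congr Ioi_ae_eq_Ici]
    _ = _ := setLIntegral_congr (Iio_ae_eq_Ioc_of_measure_Iio_eq_zero hb hX_Iio)

lemma intervalIntegral_mul_eq_toReal_setLIntegral_withDensity {f g : ℝ → ℝ} (hf : Measurable f)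
    (hg : Measurable g) (hf0 : ∀ x, 0 ≤ f x) (hg0 : ∀ x, 0 ≤ g x) {a b : ℝ} (hab : a ≤ b) :
    ∫ x in a..b, f x * g x = (∫⁻ x in Ioc a b, ENNReal.ofReal (f x)
      ∂volume.withDensity fun x => ENNReal.ofReal (g x)).toReal := by
  rw [intervalIntegral.integral_of_le hab, integral_eq_lintegral_of_nonneg_ae
    (.of_forall fun x => mul_nonneg (hf0 x) (hg0 x)) (hf.mul hg).aestronglyMeasurable,
    setLIntegral_withDensity_eq_setLIntegral_mul _ hg.ennreal_ofReal hf.ennreal_ofReal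
    measurableSet_Ioc]
  simp only [Pi.mul_apply, ← ENNReal.ofReal_mul (hg0 _), mul_comm]

theorem prevalent_at_risk_probability_general
    {Ω : Type*} [MeasureSpace Ω] [IsProbabilityMeasure (ℙ : Measure Ω)]
    (T A : Ω → ℝ) (hT : Measurable T) (hA : Measurable A)
    (hindep : ProbabilityTheory.IndepFun T A ℙ)
    (hA_nonneg : ∀ᵐ ω ∂ℙ, 0 ≤ A ω)
    (h : ℝ → ℝ) (hh_meas : Measurable h) (hh_nonneg : ∀ a, 0 ≤ h a)
    (hlaw : Measure.map A ℙ = volume.withDensity (fun a => ENNReal.ofReal (h a)))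
    (S : ℝ → ℝ) (hS : ∀ x, S x = (ℙ {ω | x < T ω}).toReal)
    (hS_cont : Continuous S)
    (H : ℝ → ℝ) (hH : ∀ a, H a = (ℙ {ω | A ω ≤ a}).toReal)
    (τ θ t : ℝ) (hθ : 0 < θ) (ht : t ∈ Set.Ioc 0 τ) :
    (ℙ ({ω | t < T ω ∧ t - θ < A ω ∧ A ω < t} ∩ {ω | A ω ≤ T ω ∧ A ω < τ})).toReal /
        (ℙ {ω | A ω ≤ T ω ∧ A ω < τ}).toReal =
      S t * (H t - H (t - θ)) / ∫ a in (0:ℝ)..τ, S a * h a := by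
  obtain ⟨ht0, htτ⟩ := ht
  set ν := (ℙ : Measure Ω).map T
  set μA := (ℙ : Measure Ω).map A
  have : IsProbabilityMeasure ν := Measure.isProbabilityMeasure_map hT.aemeasurable
  have : IsProbabilityMeasure μA := Measure.isProbabilityMeasure_map hA.aemeasurable
  have hSν : ∀ x, S x = ν.real (Ioi x) := fun x => by
    rw [hS, measureReal_def, Measure.map_apply hT measurableSet_Ioi]; rfl
  have hHμA : ∀ a, H a = cdf μA a := fun a => by
    rw [hH, cdf_eq_real, measureReal_def, Measure.map_apply hA measurableSet_Iic]; rfl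
  have : NullSingletonClass ν := nullSingletonClass_of_continuous_measureReal_Ioi ν <| by
    simpa only [← hSν] using hS_cont
  have : NullSingletonClass μA := by rw [hlaw]; infer_instance
  have hsub : {ω | t < T ω ∧ t - θ < A ω ∧ A ω < t} ⊆ {ω | A ω ≤ T ω ∧ A ω < τ} :=
    fun _ hω => ⟨(hω.2.2.trans hω.1).le, hω.2.2.trans_le htτ⟩
  have hnum : ℙ ({ω | t < T ω ∧ t - θ < A ω ∧ A ω < t} ∩ {ω | A ω ≤ T ω ∧ A ω < τ})
      = ν (Ioi t) * μA (Ioo (t - θ) t) := by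
    rw [inter_eq_left.2 hsub, Measure.map_apply hT measurableSet_Ioi,
      Measure.map_apply hA measurableSet_Ioo,
      ← hindep.measure_inter_preimage_eq_mul _ _ measurableSet_Ioi measurableSet_Ioo]
    rfl
  have hden : ℙ {ω | A ω ≤ T ω ∧ A ω < τ} = ∫⁻ x in Ioc 0 τ, ENNReal.ofReal (S x) ∂μA := by
    simp only [hSν]
    exact hindep.symm.measure_le_and_lt_eq_lintegral_Ioc hA hT hA_nonneg (ht0.le.trans htτ)
  have hS_nonneg : ∀ x, 0 ≤ S x := fun x => hS x ▸ ENNReal.toReal_nonneg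
  rw [hnum, hden, intervalIntegral_mul_eq_toReal_setLIntegral_withDensity hS_cont.measurable
    hh_meas hS_nonneg hh_nonneg (ht0.le.trans htτ), ← hlaw, ENNReal.toReal_mul, ← measureReal_def,
    ← measureReal_def, ← hSν, measureReal_Ioo_eq_cdf_sub (by linarith), hHμA, hHμA]

/-- Appendix A, at-risk probability of a prevalent patient: under the
same setup as Statement 14, with CDF H(a) = P(A ≤ a), for 0 < t ≤ τ and
P(A ≤ T and A < τ) > 0,
P(T > t and t − θ < A < t | A ≤ T and A < τ)
  = S(t)·(H(t) − H(t−θ)) / ∫₀^τ S(a)·h(a) da,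
where conditional probability of E given F is P(E ∩ F)/P(F). -/
theorem prevalent_at_risk_probability
    {Ω : Type*} [MeasureSpace Ω] [IsProbabilityMeasure (ℙ : Measure Ω)]
    (T A : Ω → ℝ) (hT : Measurable T) (hA : Measurable A)
    (hindep : ProbabilityTheory.IndepFun T A ℙ)
    (hA_nonneg : ∀ᵐ ω ∂ℙ, 0 ≤ A ω)
    (h : ℝ → ℝ) (hh_meas : Measurable h) (hh_nonneg : ∀ a, 0 ≤ h a)
    (hh_int : (∫ a, h a) = 1)
    (hlaw : Measure.map A ℙ = volume.withDensity (fun a => ENNReal.ofReal (h a)))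
    (S : ℝ → ℝ) (hS : ∀ x, S x = (ℙ {ω | x < T ω}).toReal)
    (hS_cont : Continuous S)
    (H : ℝ → ℝ) (hH : ∀ a, H a = (ℙ {ω | A ω ≤ a}).toReal)
    (τ θ t : ℝ) (hτ : 0 < τ) (hθ : 0 < θ) (ht : t ∈ Set.Ioc 0 τ)
    (hpos : 0 < (ℙ {ω | A ω ≤ T ω ∧ A ω < τ}).toReal) :
    (ℙ ({ω | t < T ω ∧ t - θ < A ω ∧ A ω < t} ∩ {ω | A ω ≤ T ω ∧ A ω < τ})).toReal /
        (ℙ {ω | A ω ≤ T ω ∧ A ω < τ}).toReal =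
      S t * (H t - H (t - θ)) / ∫ a in (0:ℝ)..τ, S a * h a :=
  prevalent_at_risk_probability_general T A hT hA hindep hA_nonneg h hh_meas hh_nonneg hlaw S hS
    hS_cont H hH τ θ t hθ ht
end
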